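/- arXiv:math/0502050 — 6 statements merged into one kernel-verified Lean document; each statement's English description precedes it below -/
import Mathlib

section
/- The homomorphism h: CB_n → A_n defined by h(r) = σ_1⋯σ_{n-1} and h(τ_i) = σ_i (1 ≤ i ≤ n-1) is surjective and admits a section, namely the homomorphism A_n → CB_n sending σ_i to τ_i. -/
open FreeGroup

/-- The braid relations of the Artin braid group `Aₙ`, with generator `i : Fin (n-1)`
representing `σ_{i+1}`. -/
def artinRels (n : ℕ) : Set (FreeGroup (Fin (n - 1))) :=
  {x | (∃ i j : Fin (n - 1), (i : ℕ) + 1 = (j : ℕ) ∧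
          x = of i * of j * of i * (of j * of i * of j)⁻¹) ∨
       (∃ i j : Fin (n - 1), (i : ℕ) + 1 < (j : ℕ) ∧
          x = of i * of j * (of j * of i)⁻¹)}

/-- The Artin braid group `Aₙ` on `n` strings. -/
def ArtinBraidGroup (n : ℕ) : Type :=
  PresentedGroup (artinRels n)

noncomputable instance (n : ℕ) : Group (ArtinBraidGroup n) := by
  unfold ArtinBraidGroup; infer_instance

/-- The generator `σ_{i+1}` of `Aₙ`, for `i : Fin (n-1)`. -/
def artinSigma (n : ℕ) (i : Fin (n - 1)) : ArtinBraidGroup n :=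
  PresentedGroup.of i

/-- The element `σ₁ σ₂ ⋯ σ_{n-1}` of `Aₙ`. -/
noncomputable def artinRword (n : ℕ) : ArtinBraidGroup n :=
  ((List.finRange (n - 1)).map (artinSigma n)).prod

/-- The relations of the annular braid group `CBₙ`: generators `some i` (`i ∈ ℤ/n`)
are the `τᵢ`, and `none` is `r`; the relations are `r τᵢ r⁻¹ = τ_{i+1}`,
`τᵢ τ_{i+1} τᵢ = τ_{i+1} τᵢ τ_{i+1}`, and `τᵢ τⱼ = τⱼ τᵢ` for `j - i ≢ ±1 (mod n)`. -/
def annularRels (n : ℕ) : Set (FreeGroup (Option (ZMod n))) :=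
  {x | (∃ i : ZMod n,
          x = of none * of (some i) * (of none)⁻¹ * (of (some (i + 1)))⁻¹) ∨
       (∃ i : ZMod n,
          x = of (some i) * of (some (i + 1)) * of (some i) *
            (of (some (i + 1)) * of (some i) * of (some (i + 1)))⁻¹) ∨
       (∃ i j : ZMod n, j - i ≠ 1 ∧ i - j ≠ 1 ∧
          x = of (some i) * of (some j) * (of (some j) * of (some i))⁻¹)}

/-- The annular braid group `CBₙ`. -/
def AnnularBraidGroup (n : ℕ) : Type :=
  PresentedGroup (annularRels n)

noncomputable instance (n : ℕ) : Group (AnnularBraidGroup n) := by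
  unfold AnnularBraidGroup; infer_instance

/-- The generator `τᵢ` of `CBₙ`. -/
def annTauGen (n : ℕ) (i : ZMod n) : AnnularBraidGroup n :=
  PresentedGroup.of (some i)

/-- The generator `r` of `CBₙ`. -/
def annRGen (n : ℕ) : AnnularBraidGroup n :=
  PresentedGroup.of none

/-!
Conjugation by `R = σ₁ ⋯ σ_{n-1}` shifts `σᵢ` to `σ_{i+1}` for `i < n - 1`, and `R²` carries
`σ_{n-1}` to `σ₁`, since `R² = σ₁ R (σ₁ ⋯ σ_{n-2})` and `R = (σ₁ ⋯ σ_{n-2}) σ_{n-1}`. So sending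
`τ₀ ↦ R σ_{n-1} R⁻¹` makes conjugation by `R` permute the images of the `τₖ` cyclically, which is
the relation `r τₖ r⁻¹ = τ_{k+1}`. The remaining relations of `CBₙ` are conjugates, by powers of
`r`, of relations involving `τ₁`, whose images are braid relations of `Aₙ`. Conversely `σᵢ ↦ τᵢ`
respects the braid relations, and `h(τᵢ) = σᵢ` gives `h ∘ s = id`.
-/

namespace ArtinBraidGroup

variable {n : ℕ}

theorem artinSigma_braid {i j : Fin (n - 1)} (h : (i : ℕ) + 1 = j) :
    artinSigma n i * artinSigma n j * artinSigma n i =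
      artinSigma n j * artinSigma n i * artinSigma n j := by
  have rel := PresentedGroup.mk_eq_mk_of_mul_inv_mem (rels := artinRels n)
    (x := of i * of j * of i) (Or.inl ⟨i, j, h, rfl⟩)
  simp only [_root_.map_mul] at rel
  exact rel

theorem artinSigma_commute {i j : Fin (n - 1)} (h : (i : ℕ) + 1 < j) :
    Commute (artinSigma n i) (artinSigma n j) := by
  have rel := PresentedGroup.mk_eq_mk_of_mul_inv_mem (rels := artinRels n)
    (x := of i * of j) (Or.inr ⟨i, j, h, rfl⟩)
  simp only [_root_.map_mul] at rel
  exact rel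

/-- `σ_{k+1}` for `k < n - 1`, and `1` beyond; the padding makes far commutation unconditional. -/
noncomputable def artinGen (n k : ℕ) : ArtinBraidGroup n :=
  if h : k < n - 1 then artinSigma n ⟨k, h⟩ else 1

theorem artinGen_of_lt (i : Fin (n - 1)) : artinGen n i = artinSigma n i := by
  simp [artinGen]

theorem artinGen_braid {k : ℕ} (hk : k + 1 < n - 1) :
    artinGen n k * artinGen n (k + 1) * artinGen n k =
      artinGen n (k + 1) * artinGen n k * artinGen n (k + 1) := by
  simpa only [artinGen, dif_pos hk, dif_pos (k.lt_succ_self.trans hk)] using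
    artinSigma_braid rfl

theorem artinGen_commute {j k : ℕ} (h : j + 2 ≤ k) : Commute (artinGen n j) (artinGen n k) := by
  by_cases hk : k < n - 1
  · simpa only [artinGen, dif_pos hk, dif_pos (by omega : j < n - 1)] using
      artinSigma_commute (by simp; omega)
  · simp [artinGen, hk]

/-- `σ_{s+1} σ_{s+2} ⋯ σ_{s+l}`. -/
noncomputable def artinGenProd (n s l : ℕ) : ArtinBraidGroup n :=
  ((List.range' s l).map (artinGen n)).prod

theorem artinGenProd_succ_left (s l : ℕ) :
    artinGenProd n s (l + 1) = artinGen n s * artinGenProd n (s + 1) l := by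
  simp [artinGenProd, List.range'_succ]

theorem artinGenProd_succ_right (s l : ℕ) :
    artinGenProd n s (l + 1) = artinGenProd n s l * artinGen n (s + l) := by
  simp [artinGenProd, List.range'_1_concat]

theorem artinGenProd_add (s l₁ l₂ : ℕ) :
    artinGenProd n s (l₁ + l₂) = artinGenProd n s l₁ * artinGenProd n (s + l₁) l₂ := by
  simp [artinGenProd, ← List.range'_append_1]

theorem artinRword_eq_artinGenProd : artinRword n = artinGenProd n 0 (n - 1) := by
  rw [artinRword, artinGenProd, ← List.range_eq_range', ← List.map_coe_finRange_eq_range,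
    List.map_map]
  exact congrArg List.prod (List.map_congr_left fun i _ => (artinGen_of_lt i).symm)

theorem commute_artinGen_artinGenProd {t s l : ℕ} (h : s + l + 1 ≤ t ∨ t + 2 ≤ s) :
    Commute (artinGen n t) (artinGenProd n s l) := by
  refine Commute.list_prod_right _ _ fun x hx => ?_
  obtain ⟨k, hk, rfl⟩ := List.mem_map.mp hx
  rw [List.mem_range'_1] at hk
  rcases h with h | h
  · exact (artinGen_commute (by omega)).symm
  · exact artinGen_commute (by omega)

theorem artinRword_mul_artinGen {i : ℕ} (hi : i + 1 < n - 1) :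
    artinRword n * artinGen n i = artinGen n (i + 1) * artinRword n := by
  obtain ⟨l, hl⟩ : ∃ l, n - 1 = i + 2 + l := ⟨n - 1 - (i + 2), by omega⟩
  set A := artinGenProd n 0 i
  set B := artinGenProd n (i + 2) l
  have hR : artinRword n = A * (artinGen n i * artinGen n (i + 1)) * B := by
    rw [artinRword_eq_artinGenProd, hl, artinGenProd_add, artinGenProd_succ_right,
      artinGenProd_succ_right, mul_assoc A]
    simp only [zero_add, B]
  have hA : Commute (artinGen n (i + 1)) A := commute_artinGen_artinGenProd (by omega)
  have hB : Commute (artinGen n i) B := commute_artinGen_artinGenProd (by omega)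
  calc artinRword n * artinGen n i
      = A * (artinGen n i * artinGen n (i + 1) * artinGen n i) * B := by
        rw [hR, mul_assoc _ B, ← hB.eq]; simp only [mul_assoc]
    _ = A * artinGen n (i + 1) * (artinGen n i * artinGen n (i + 1)) * B := by
        rw [artinGen_braid hi]; simp only [mul_assoc]
    _ = artinGen n (i + 1) * artinRword n := by
        rw [← hA.eq, hR]; simp only [mul_assoc]

theorem artinRword_mul_artinGenProd {s l : ℕ} (h : s + l < n - 1) :
    artinRword n * artinGenProd n s l = artinGenProd n (s + 1) l * artinRword n := by
  induction l with
  | zero => simp [artinGenProd]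
  | succ l ih =>
    rw [artinGenProd_succ_right, artinGenProd_succ_right, ← mul_assoc, ih (by omega),
      mul_assoc, artinRword_mul_artinGen (by omega), ← mul_assoc, Nat.add_right_comm]

theorem artinRword_sq_mul_artinGen (hn : 2 ≤ n) :
    artinRword n ^ 2 * artinGen n (n - 2) = artinGen n 0 * artinRword n ^ 2 := by
  obtain ⟨k, rfl⟩ : ∃ k, n = k + 2 := ⟨n - 2, by omega⟩
  have hm : k + 2 - 1 = k + 1 := rfl
  have hleft : artinRword (k + 2) = artinGen _ 0 * artinGenProd _ 1 k := by
    rw [artinRword_eq_artinGenProd, hm, artinGenProd_succ_left]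
  have hright : artinRword (k + 2) = artinGenProd _ 0 k * artinGen _ k := by
    rw [artinRword_eq_artinGenProd, hm, artinGenProd_succ_right, zero_add]
  have hshift := artinRword_mul_artinGenProd (n := k + 2) (s := 0) (l := k) (by omega)
  calc artinRword (k + 2) ^ 2 * artinGen _ (k + 2 - 2)
      = artinGen _ 0 * (artinGenProd _ 1 k * artinRword _) * artinGen _ k := by
        rw [sq]; nth_rw 1 [hleft]; simp only [mul_assoc]; rfl
    _ = artinGen _ 0 * artinRword _ ^ 2 := by
        rw [← hshift, sq]; nth_rw 3 [hright]; simp only [mul_assoc]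

/-- The image of `τₖ` in `Aₙ`: `σₖ` for `k ≠ 0`, and for `k = 0` the value
`R σ_{n-1} R⁻¹` forced by the relation `r τ_{n-1} r⁻¹ = τ₀`. -/
noncomputable def artinTau (n : ℕ) (k : ZMod n) : ArtinBraidGroup n :=
  if k = 0 then artinRword n * artinGen n (n - 2) * (artinRword n)⁻¹ else artinGen n (k.val - 1)

theorem artinTau_zero : artinTau n 0 = artinRword n * artinGen n (n - 2) * (artinRword n)⁻¹ :=
  if_pos rfl

theorem artinTau_natCast {j : ℕ} (h0 : j ≠ 0) (hj : j < n) :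
    artinTau n j = artinGen n (j - 1) := by
  have hval : (j : ZMod n).val = j := ZMod.val_cast_of_lt hj
  rw [artinTau, if_neg fun h => h0 (by rw [← hval, h, ZMod.val_zero]), hval]

theorem artinTau_one (hn : 2 ≤ n) : artinTau n 1 = artinGen n 0 := by
  simpa using artinTau_natCast (n := n) (j := 1) one_ne_zero (by omega)

theorem artinRword_mul_artinTau_natCast (hn : 2 ≤ n) {j : ℕ} (hj : j < n) :
    artinRword n * artinTau n j = artinTau n (j + 1 : ℕ) * artinRword n := by
  rcases Nat.eq_zero_or_pos j with rfl | hj0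
  · rw [Nat.cast_zero, artinTau_zero, zero_add, Nat.cast_one, artinTau_one hn,
      show artinRword n * (artinRword n * artinGen n (n - 2) * (artinRword n)⁻¹) =
        artinRword n ^ 2 * artinGen n (n - 2) * (artinRword n)⁻¹ by rw [sq]; group,
      artinRword_sq_mul_artinGen hn]
    group
  rcases (show j + 1 ≤ n from hj).eq_or_lt with hjn | hjn
  · rw [hjn, ZMod.natCast_self, artinTau_zero, artinTau_natCast hj0.ne' hj, inv_mul_cancel_right,
      show j - 1 = n - 2 by omega]
  · rw [artinTau_natCast hj0.ne' hj, artinTau_natCast (Nat.add_one_ne_zero j) hjn,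
      Nat.add_sub_cancel, artinRword_mul_artinGen (by omega), Nat.sub_add_cancel hj0]

theorem artinRword_mul_artinTau (hn : 2 ≤ n) (k : ZMod n) :
    artinRword n * artinTau n k = artinTau n (k + 1) * artinRword n := by
  have : NeZero n := ⟨by omega⟩
  simpa [ZMod.natCast_zmod_val] using artinRword_mul_artinTau_natCast hn k.val_lt

theorem artinTau_add_natCast (hn : 2 ≤ n) (k : ZMod n) (p : ℕ) :
    artinTau n (k + p) = MulAut.conj (artinRword n ^ p) (artinTau n k) := by
  induction p with
  | zero => simp
  | succ p ih =>
    rw [Nat.cast_succ, ← add_assoc, pow_succ', _root_.map_mul, MulAut.mul_apply, ← ih,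
      MulAut.conj_apply, artinRword_mul_artinTau hn, mul_inv_cancel_right]

theorem artinTau_braid_one (hn : 2 ≤ n) :
    artinTau n 1 * artinTau n (1 + 1) * artinTau n 1 =
      artinTau n (1 + 1) * artinTau n 1 * artinTau n (1 + 1) := by
  have h2 : artinTau n (1 + 1) = artinRword n * artinGen n 0 * (artinRword n)⁻¹ := by
    rw [← artinTau_one hn, artinRword_mul_artinTau hn, mul_inv_cancel_right]
  rw [h2, artinTau_one hn]
  rcases hn.eq_or_lt with rfl | hn
  · have hR : artinRword 2 = artinGen 2 0 := by
      rw [artinRword_eq_artinGenProd, artinGenProd_succ_left]; rfl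
    simp only [hR, mul_inv_cancel_right]
  · rw [artinRword_mul_artinGen (i := 0) (by omega), mul_inv_cancel_right]
    exact artinGen_braid (by omega)

theorem artinTau_braid (hn : 2 ≤ n) (k : ZMod n) :
    artinTau n k * artinTau n (k + 1) * artinTau n k =
      artinTau n (k + 1) * artinTau n k * artinTau n (k + 1) := by
  have : NeZero n := ⟨by omega⟩
  have hk : k = 1 + ((k - 1).val : ZMod n) := by rw [ZMod.natCast_zmod_val]; ring
  rw [hk, add_right_comm, artinTau_add_natCast hn, artinTau_add_natCast hn]
  simp only [← _root_.map_mul, artinTau_braid_one hn]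

theorem commute_artinTau_one_natCast (hn : 2 ≤ n) {c : ℕ} (hc : 3 ≤ c) (hcn : c < n) :
    Commute (artinTau n 1) (artinTau n c) := by
  rw [artinTau_one hn, artinTau_natCast (by omega) hcn]
  exact artinGen_commute (by omega)

theorem commute_artinTau (hn : 2 ≤ n) {i j : ZMod n} (hji : j - i ≠ 1) (hij : i - j ≠ 1) :
    Commute (artinTau n i) (artinTau n j) := by
  have : NeZero n := ⟨by omega⟩
  rcases eq_or_ne i j with rfl | hne
  · exact Commute.refl _
  set c := (j - i + 1).val
  have hc : (c : ZMod n) = j - i + 1 := ZMod.natCast_zmod_val _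
  have hc3 : 3 ≤ c := by
    by_contra! h
    interval_cases hcv : c
    · exact hij (by linear_combination hc)
    · exact hne (by linear_combination hc)
    · exact hji (by linear_combination -hc)
  have hi : i = 1 + ((i - 1).val : ZMod n) := by rw [ZMod.natCast_zmod_val]; ring
  have hj : j = c + ((i - 1).val : ZMod n) := by rw [hc, ZMod.natCast_zmod_val]; ring
  rw [hi, hj, artinTau_add_natCast hn, artinTau_add_natCast hn]
  exact (commute_artinTau_one_natCast hn hc3 (ZMod.val_lt _)).map _

end ArtinBraidGroup

namespace AnnularBraidGroup

variable {n : ℕ}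

theorem annTauGen_braid (i : ZMod n) :
    annTauGen n i * annTauGen n (i + 1) * annTauGen n i =
      annTauGen n (i + 1) * annTauGen n i * annTauGen n (i + 1) := by
  have rel := PresentedGroup.mk_eq_mk_of_mul_inv_mem (rels := annularRels n)
    (x := of (some i) * of (some (i + 1)) * of (some i)) (Or.inr (Or.inl ⟨i, rfl⟩))
  simp only [_root_.map_mul] at rel
  exact rel

theorem annTauGen_commute {i j : ZMod n} (hji : j - i ≠ 1) (hij : i - j ≠ 1) :
    Commute (annTauGen n i) (annTauGen n j) := by
  have rel := PresentedGroup.mk_eq_mk_of_mul_inv_mem (rels := annularRels n)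
    (x := of (some i) * of (some j)) (Or.inr (Or.inr ⟨i, j, hji, hij, rfl⟩))
  simp only [_root_.map_mul] at rel
  exact rel

end AnnularBraidGroup

theorem ZMod.natCast_sub_natCast_ne_one {n a b : ℕ} (ha : 0 < a) (hab : a + 1 < b)
    (hb : b < n) :
    (b : ZMod n) - a ≠ 1 ∧ (a : ZMod n) - b ≠ 1 := by
  constructor <;> intro h
  · have := (ZMod.natCast_eq_natCast_iff' b (a + 1) n).1 (by push_cast; linear_combination h)
    rw [Nat.mod_eq_of_lt hb, Nat.mod_eq_of_lt (by omega)] at this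
    omega
  · have := (ZMod.natCast_eq_natCast_iff' a (b + 1) n).1 (by push_cast; linear_combination h)
    rw [Nat.mod_eq_of_lt (by omega)] at this
    rcases (show b + 1 ≤ n from hb).eq_or_lt with hbn | hbn
    · rw [hbn, Nat.mod_self] at this
      omega
    · rw [Nat.mod_eq_of_lt hbn] at this
      omega

section Homomorphisms

open ArtinBraidGroup AnnularBraidGroup

variable {n : ℕ}

noncomputable def annularToArtin (n : ℕ) (hn : 2 ≤ n) : AnnularBraidGroup n →* ArtinBraidGroup n :=
  PresentedGroup.toGroup (f := fun o => o.elim (artinRword n) (artinTau n)) <| by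
    rintro r (⟨i, rfl⟩ | ⟨i, rfl⟩ | ⟨i, j, hji, hij, rfl⟩) <;>
      simp only [_root_.map_mul, _root_.map_inv, lift_apply_of, Option.elim, mul_inv_eq_one]
    · rw [mul_inv_eq_iff_eq_mul]
      exact artinRword_mul_artinTau hn i
    · exact artinTau_braid hn i
    · exact commute_artinTau hn hji hij

noncomputable def artinToAnnular (n : ℕ) : ArtinBraidGroup n →* AnnularBraidGroup n :=
  PresentedGroup.toGroup (f := fun i : Fin (n - 1) => annTauGen n ((i + 1 : ℕ) : ZMod n)) <| by
    rintro r (⟨i, j, hij, rfl⟩ | ⟨i, j, hij, rfl⟩) <;>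
      simp only [_root_.map_mul, _root_.map_inv, lift_apply_of, mul_inv_eq_one]
    · simp only [← hij, Nat.cast_succ]
      exact annTauGen_braid _
    · have hne := ZMod.natCast_sub_natCast_ne_one (n := n) (Nat.succ_pos i) (b := j + 1)
        (by omega) (by omega)
      exact annTauGen_commute hne.1 hne.2

theorem annularToArtin_annRGen (hn : 2 ≤ n) : annularToArtin n hn (annRGen n) = artinRword n :=
  PresentedGroup.toGroup.of _

theorem annularToArtin_annTauGen (hn : 2 ≤ n) (k : ZMod n) :
    annularToArtin n hn (annTauGen n k) = artinTau n k :=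
  PresentedGroup.toGroup.of _

theorem annularToArtin_annTauGen_natCast_succ (hn : 2 ≤ n) (i : Fin (n - 1)) :
    annularToArtin n hn (annTauGen n ((i + 1 : ℕ) : ZMod n)) = artinSigma n i := by
  rw [annularToArtin_annTauGen, artinTau_natCast (Nat.add_one_ne_zero _) (by omega),
    Nat.add_sub_cancel, artinGen_of_lt]

theorem artinToAnnular_artinSigma (i : Fin (n - 1)) :
    artinToAnnular n (artinSigma n i) = annTauGen n ((i + 1 : ℕ) : ZMod n) :=
  PresentedGroup.toGroup.of _

theorem annularToArtin_artinToAnnular (hn : 2 ≤ n) (x : ArtinBraidGroup n) :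
    annularToArtin n hn (artinToAnnular n x) = x := by
  suffices (annularToArtin n hn).comp (artinToAnnular n) = MonoidHom.id _ from
    DFunLike.congr_fun this x
  refine PresentedGroup.ext fun i => ?_
  exact (congrArg _ (artinToAnnular_artinSigma i)).trans
    (annularToArtin_annTauGen_natCast_succ hn i)

end Homomorphisms

/-- The homomorphism `h : CBₙ → Aₙ` defined by `h(r) = σ₁⋯σ_{n-1}` and
`h(τᵢ) = σᵢ` (`1 ≤ i ≤ n-1`) is surjective, and it admits a section, namely the
homomorphism `Aₙ → CBₙ` sending `σᵢ` to `τᵢ`. -/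
theorem annular_to_artin_surjective_section (n : ℕ) (hn : 2 ≤ n) :
    ∃ h : AnnularBraidGroup n →* ArtinBraidGroup n,
      h (annRGen n) = artinRword n ∧
      (∀ i : Fin (n - 1), h (annTauGen n (((i : ℕ) + 1 : ℕ) : ZMod n)) = artinSigma n i) ∧
      Function.Surjective h ∧
      ∃ s : ArtinBraidGroup n →* AnnularBraidGroup n,
        (∀ i : Fin (n - 1), s (artinSigma n i) = annTauGen n (((i : ℕ) + 1 : ℕ) : ZMod n)) ∧
        ∀ x, h (s x) = x :=
  ⟨annularToArtin n hn, annularToArtin_annRGen hn, annularToArtin_annTauGen_natCast_succ hn,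
    Function.LeftInverse.surjective (annularToArtin_artinToAnnular hn), artinToAnnular n,
    artinToAnnular_artinSigma, annularToArtin_artinToAnnular hn⟩
end

section
/- A full additive subcategory 𝒜 of a triangulated category 𝒟 is the heart of a bounded t-structure on 𝒟 if and only if: (a) for all objects A, B of 𝒜 and all k < 0, Hom_𝒟(A, B[k]) = 0; and (b) every nonzero object E of 𝒟 admits a finite filtration by triangles 0 = E_m → E_{m+1} → ⋯ → E_n = E whose factors A_i (the cones of E_{i-1} → E_i) satisfy A_i[i] ∈ 𝒜. -/
open CategoryTheory Limits Pretriangulated Triangulated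

variable {C : Type*} [Category C] [Preadditive C] [HasZeroObject C] [HasShift C ℤ]
  [∀ n : ℤ, (shiftFunctor C n).Additive] [Pretriangulated C]

/-- The heart of a t-structure, as the set of objects `X` with `X ∈ 𝒟^{≤0} ∩ 𝒟^{≥0}`. -/
def heartSet (t : TStructure C) : Set C :=
  {X | t.le 0 X ∧ t.ge 0 X}

/-- A t-structure is bounded if every object lies in `𝒟^{≤b} ∩ 𝒟^{≥a}` for some
integers `a ≤ b`. -/
def TStructureIsBounded (t : TStructure C) : Prop :=
  ∀ X : C, ∃ a b : ℤ, t.ge a X ∧ t.le b X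

namespace HeartAux

variable (𝒜 : Set C)

/-- filtration with factors `A i` of "degree `i`" for `i ∈ (m, n]`. -/
def Filt (m n : ℤ) (E : C) : Prop :=
  m ≤ n ∧ ∃ (X : ℤ → C) (f : ∀ i : ℤ, X i ⟶ X (i + 1)) (A : ℤ → C)
    (g : ∀ i : ℤ, X (i + 1) ⟶ A (i + 1)) (h : ∀ i : ℤ, A (i + 1) ⟶ (X i)⟦(1 : ℤ)⟧),
    IsZero (X m) ∧ Nonempty (X n ≅ E) ∧
    ∀ i : ℤ, m ≤ i → i < n →
      (Triangle.mk (f i) (g i) (h i) ∈ distTriang C) ∧ (A (i + 1))⟦i + 1⟧ ∈ 𝒜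

variable {𝒜}

lemma Filt.le {m n : ℤ} {E : C} (h : Filt 𝒜 m n E) : m ≤ n := h.1

lemma Filt.of_iso {m n : ℤ} {E E' : C} (h : Filt 𝒜 m n E) (e : E ≅ E') : Filt 𝒜 m n E' := by
  obtain ⟨hmn, X, f, A, g, hh, hz, ⟨eE⟩, htri⟩ := h
  exact ⟨hmn, X, f, A, g, hh, hz, ⟨eE ≪≫ e⟩, htri⟩

lemma Filt.of_isZero {E : C} (hE : IsZero E) (n : ℤ) : Filt 𝒜 n n E :=
  ⟨le_refl n, fun _ => E, fun _ => 𝟙 E, fun _ => E, fun _ => 𝟙 E, fun _ => 0, hE,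
    ⟨Iso.refl E⟩, fun i hi hi' => absurd (lt_of_le_of_lt hi hi') (lt_irrefl n)⟩

lemma isZero_shift_obj (a : ℤ) {X : C} (hX : IsZero X) : IsZero (X⟦a⟧) := by
  rw [IsZero.iff_id_eq_zero] at hX ⊢
  rw [← (shiftFunctor C a).map_id, hX, Functor.map_zero]

lemma Filt.isZero {n : ℤ} {E : C} (h : Filt 𝒜 n n E) : IsZero E := by
  obtain ⟨-, X, f, A, g, hh, hz, ⟨eE⟩, -⟩ := h
  exact hz.of_iso eE.symm

end HeartAux

namespace HeartAux2
open HeartAux ZeroObject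

variable {C : Type*} [Category C] [Preadditive C] [HasZeroObject C] [HasShift C ℤ]
  [∀ n : ℤ, (shiftFunctor C n).Additive] [Pretriangulated C]
variable {𝒜 : Set C}

lemma filt_pure {d : ℤ} {A' : C} (hA : A'⟦d⟧ ∈ 𝒜) : Filt 𝒜 (d - 1) d A' := by
  refine ⟨by omega, fun i => if i ≤ d - 1 then (0 : C) else A', fun i => 0, fun _ => A',
    fun i => if h : i + 1 ≤ d - 1 then 0 else eqToHom (if_neg h), fun i => 0, ?_, ?_, ?_⟩
  · beta_reduce
    rw [if_pos (le_refl _)]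
    exact isZero_zero C
  · exact ⟨eqToIso (show (if (d : ℤ) ≤ d - 1 then (0:C) else A') = A' from if_neg (by omega))⟩
  · intro i hi hi'
    have hid : i = d - 1 := by omega
    subst hid
    constructor
    · refine isomorphic_distinguished _ (contractible_distinguished₁ A') _ ?_
      have hz1 : IsZero ((fun i => if i ≤ d - 1 then (0 : C) else A') (d - 1)) := by
        beta_reduce; rw [if_pos (le_refl _)]; exact isZero_zero C
      refine Triangle.isoMk _ _ hz1.isoZero
        (eqToIso (show (if (d - 1 + 1 : ℤ) ≤ d - 1 then (0:C) else A') = A' from if_neg (by omega)))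
        (Iso.refl A') ?_ ?_ ?_
      · exact hz1.eq_of_src _ _
      · dsimp only [Triangle.mk]
        dsimp
        rw [dif_neg (by omega : ¬ (d - 1 + 1 ≤ d - 1))]
      · dsimp only [Triangle.mk]
        simp
    · beta_reduce
      rw [show d - 1 + 1 = d by ring]
      exact hA

lemma Filt.succ (hiso : ∀ ⦃X Y : C⦄, (X ≅ Y) → X ∈ 𝒜 → Y ∈ 𝒜)
    {Z : C} (hZA : Z ∈ 𝒜) (hZ : IsZero Z)
    {m n : ℤ} {E : C} (hE : Filt 𝒜 m n E) : Filt 𝒜 m (n + 1) E := by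
  obtain ⟨hmn, X, f, A, g, hh, hz, ⟨eE⟩, htri⟩ := hE
  have p₁ : ∀ i : ℤ, i ≤ n → (if i ≤ n then X i else X n) = X i := fun i h => if_pos h
  have p₂ : ∀ i : ℤ, ¬ (i ≤ n) → (if i ≤ n then X i else X n) = X n := fun i h => if_neg h
  refine ⟨by omega, fun i => if i ≤ n then X i else X n,
    fun i => if h : i + 1 ≤ n then
        eqToHom (p₁ i (by omega)) ≫ f i ≫ eqToHom (p₁ (i+1) h).symm
      else eqToHom (by
        beta_reduce
        by_cases h' : i ≤ n
        · have h'' : i = n := by omega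
          rw [p₁ i h', p₂ (i+1) h, h'']
        · rw [p₂ i h', p₂ (i+1) h]),
    fun i => if i ≤ n then A i else Z,
    fun i => if h : i + 1 ≤ n then
        eqToHom (p₁ (i+1) h) ≫ g i ≫ eqToHom (show A (i+1) = if i + 1 ≤ n then A (i+1) else Z from (if_pos h).symm)
      else 0,
    fun i => if h : i + 1 ≤ n then
        eqToHom (show (if i + 1 ≤ n then A (i+1) else Z) = A (i+1) from if_pos h) ≫ hh i ≫
          (shiftFunctor C (1 : ℤ)).map (eqToHom (p₁ i (by omega)).symm)
      else 0, ?_, ?_, ?_⟩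
  · beta_reduce
    rw [p₁ m hmn]
    exact hz
  · exact ⟨eqToIso (p₂ (n+1) (by omega)) ≪≫ eE⟩
  · intro i hi hi'
    by_cases hlt : i < n
    · have h1 : i + 1 ≤ n := by omega
      constructor
      · beta_reduce
        rw [dif_pos h1, dif_pos h1, dif_pos h1]
        refine isomorphic_distinguished _ (htri i hi hlt).1 _ ?_
        exact Triangle.isoMk _ _ (eqToIso (p₁ i (by omega))) (eqToIso (p₁ (i+1) h1))
          (eqToIso (if_pos h1)) (by dsimp only [Triangle.mk]; simp) (by dsimp only [Triangle.mk]; simp) (by dsimp only [Triangle.mk]; simp)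
      · beta_reduce
        rw [if_pos h1]
        exact (htri i hi hlt).2
    · have h2 : n = i := by omega
      subst h2
      have hno : ¬ (n + 1 ≤ n) := by omega
      have hzA : IsZero ((fun i => if i ≤ n then A i else Z) (n + 1)) := by
        beta_reduce; rw [if_neg hno]; exact hZ
      constructor
      · beta_reduce
        simp only [dif_neg hno]
        refine isomorphic_distinguished _ (contractible_distinguished (X n)) _ ?_
        refine Triangle.isoMk _ _ (eqToIso (p₁ n (le_refl n))) (eqToIso (p₂ (n+1) hno))
          hzA.isoZero ?_ ?_ ?_
        · dsimp only [Triangle.mk, contractibleTriangle]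
          simp
        · exact (isZero_zero C).eq_of_tgt _ _
        · exact hzA.eq_of_src _ _
      · beta_reduce
        rw [if_neg hno]
        exact hiso (hZ.iso (isZero_shift_obj (n + 1) hZ)) hZA

lemma Filt.mono (hiso : ∀ ⦃X Y : C⦄, (X ≅ Y) → X ∈ 𝒜 → Y ∈ 𝒜)
    {Z : C} (hZA : Z ∈ 𝒜) (hZ : IsZero Z)
    {m n n' : ℤ} {E : C} (hE : Filt 𝒜 m n E) (h : n ≤ n') : Filt 𝒜 m n' E := by
  obtain ⟨k, hk⟩ : ∃ k : ℕ, n' = n + k := ⟨(n' - n).toNat, by omega⟩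
  subst hk
  clear h
  induction k with
  | zero => simpa using hE
  | succ k ih =>
      have h2 := Filt.succ hiso hZA hZ ih
      rw [show (n + (k : ℤ) + 1) = n + ((k + 1 : ℕ) : ℤ) by push_cast; ring] at h2
      exact h2


lemma Filt.shiftFilt (hiso : ∀ ⦃X Y : C⦄, (X ≅ Y) → X ∈ 𝒜 → Y ∈ 𝒜)
    {m n : ℤ} {E : C} (hE : Filt 𝒜 m n E) (a : ℤ) :
    Filt 𝒜 (m - a) (n - a) (E⟦a⟧) := by
  obtain ⟨hmn, X, f, A, g, hh, hz, ⟨eE⟩, htri⟩ := hE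
  refine ⟨by omega, fun i => (X (i + a))⟦a⟧,
    fun i => (a.negOnePow • (shiftFunctor C a).map (f (i + a))) ≫
      eqToHom (congrArg (fun t : ℤ => (X t)⟦a⟧) (show i + a + 1 = i + 1 + a by ring)),
    fun i => (A (i + a))⟦a⟧,
    fun i => eqToHom (congrArg (fun t : ℤ => (X t)⟦a⟧) (show i + 1 + a = i + a + 1 by ring)) ≫
      (a.negOnePow • (shiftFunctor C a).map (g (i + a))) ≫
      eqToHom (congrArg (fun t : ℤ => (A t)⟦a⟧) (show i + a + 1 = i + 1 + a by ring)),
    fun i => eqToHom (congrArg (fun t : ℤ => (A t)⟦a⟧) (show i + 1 + a = i + a + 1 by ring)) ≫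
      ((Triangle.shiftFunctor C a).obj (Triangle.mk (f (i + a)) (g (i + a)) (hh (i + a)))).mor₃,
    ?_, ?_, ?_⟩
  · beta_reduce
    rw [show m - a + a = m by ring]
    exact isZero_shift_obj a hz
  · exact ⟨eqToIso (congrArg (fun t : ℤ => (X t)⟦a⟧) (show n - a + a = n by ring)) ≪≫
      (shiftFunctor C a).mapIso eE⟩
  · intro i hi hi'
    have hj1 : m ≤ i + a := by omega
    have hj2 : i + a < n := by omega
    constructor
    · refine isomorphic_distinguished _
        (by
          have h : Triangle.mk (a.negOnePow • (f (i + a))⟦a⟧') (a.negOnePow • (g (i + a))⟦a⟧')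
              (a.negOnePow • (hh (i + a))⟦a⟧' ≫ (shiftFunctorComm C 1 a).hom.app (X (i + a))) ∈
              distTriang C :=
            Pretriangulated.Triangle.shift_distinguished _ (htri (i + a) hj1 hj2).1 a
          exact h) _ ?_
      refine Triangle.isoMk _ _ (Iso.refl _)
        (eqToIso (congrArg (fun t : ℤ => (X t)⟦a⟧) (show i + 1 + a = i + a + 1 by ring)))
        (eqToIso (congrArg (fun t : ℤ => (A t)⟦a⟧) (show i + 1 + a = i + a + 1 by ring)))
        ?_ ?_ ?_
      · dsimp only [Triangle.mk, Triangle.shiftFunctor_obj]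
        dsimp
        simp
      · dsimp only [Triangle.mk, Triangle.shiftFunctor_obj]
        dsimp
        simp
      · dsimp only [Triangle.mk]
        dsimp
        simp [Triangle.shiftFunctor]
    · beta_reduce
      rw [show i + 1 + a = i + a + 1 by ring]
      exact hiso ((shiftFunctorAdd' C a (i + 1) (i + a + 1) (by ring)).app (A (i + a + 1)))
        (htri (i + a) hj1 hj2).2


section Vanishing

variable (hvan : ∀ A ∈ 𝒜, ∀ B ∈ 𝒜, ∀ k : ℤ, k < 0 → ∀ f : A ⟶ B⟦k⟧, f = 0)
include hvan

lemma hom_pure_pure {d e : ℤ} {P Q : C} (hP : P⟦d⟧ ∈ 𝒜) (hQ : Q⟦e⟧ ∈ 𝒜) (hde : d < e)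
    (φ : P ⟶ Q) : φ = 0 := by
  have h0 := hvan _ hP _ hQ (d - e) (by omega)
    ((shiftFunctor C d).map φ ≫ ((shiftFunctorAdd' C e (d - e) d (by ring)).app Q).hom)
  have h1 : (shiftFunctor C (d - e)).map ((shiftFunctor C e).map φ) = 0 := by
    have := congrArg (fun ψ => ψ ≫ ((shiftFunctorAdd' C e (d - e) d (by ring)).app Q).inv) h0
    simpa using this
  apply (shiftFunctor C e).map_injective
  apply (shiftFunctor C (d - e)).map_injective
  rw [h1, Functor.map_zero, Functor.map_zero]

lemma hom_pure_filt {d : ℤ} {P : C} (hP : P⟦d⟧ ∈ 𝒜) {m n : ℤ} {W : C}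
    (hW : Filt 𝒜 m n W) (hdm : d ≤ m) (φ : P ⟶ W) : φ = 0 := by
  have key : ∀ k : ℕ, ∀ (n : ℤ) (W : C), n = m + k → Filt 𝒜 m n W → ∀ φ : P ⟶ W, φ = 0 := by
    intro k
    induction k with
    | zero =>
        intro n W hn hW φ
        have : n = m := by omega
        subst this
        exact hW.isZero.eq_of_tgt _ _
    | succ k ih =>
        intro n W hn hW φ
        have hn2 : n = m + (k : ℤ) + 1 := by push_cast at hn; omega
        obtain ⟨hmn, X, f, A, g, hh, hz, ⟨eE⟩, htri⟩ := hW
        have htr := htri (n - 1) (by omega) (by omega)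
        set φ'' : P ⟶ X (n - 1 + 1) := φ ≫ eE.inv ≫ eqToHom (congrArg X (by ring : n = n - 1 + 1))
          with hφ''
        have h2 : φ'' ≫ g (n - 1) = 0 :=
          hom_pure_pure hvan hP htr.2 (by omega) _
        obtain ⟨v, hv⟩ := Triangle.coyoneda_exact₂ _ htr.1 φ'' h2
        have hv0 : v = 0 := ih (n - 1) (X (n - 1)) (by omega)
          ⟨by omega, X, f, A, g, hh, hz, ⟨Iso.refl _⟩, fun i hi hi' => htri i hi (by omega)⟩ v
        have : φ'' = 0 := by rw [hv, hv0, zero_comp]; rfl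
        have hφ : φ = φ'' ≫ eqToHom (congrArg X (by ring : n - 1 + 1 = n)) ≫ eE.hom := by
          rw [hφ'']
          simp
        rw [hφ, this, zero_comp]
  have hle := hW.le
  exact key (n - m).toNat n W (by omega) hW φ

lemma hom_filt_filt {p q : ℤ} {T : C} (hT : Filt 𝒜 p q T) {m n : ℤ} {W : C}
    (hW : Filt 𝒜 m n W) (hqm : q ≤ m) (φ : T ⟶ W) : φ = 0 := by
  have key : ∀ k : ℕ, ∀ (q : ℤ) (T : C), q = p + k → Filt 𝒜 p q T → q ≤ m →
      ∀ φ : T ⟶ W, φ = 0 := by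
    intro k
    induction k with
    | zero =>
        intro q T hq hT hqm φ
        have : q = p := by omega
        subst this
        exact hT.isZero.eq_of_src _ _
    | succ k ih =>
        intro q T hq hT hqm φ
        have hq2 : q = p + (k : ℤ) + 1 := by push_cast at hq; omega
        obtain ⟨hpq, X, f, A, g, hh, hz, ⟨eT⟩, htri⟩ := hT
        have htr := htri (q - 1) (by omega) (by omega)
        set φ' : X (q - 1 + 1) ⟶ W :=
          eqToHom (congrArg X (by ring : q - 1 + 1 = q)) ≫ eT.hom ≫ φ with hφ'
        have h1 : f (q - 1) ≫ φ' = 0 := by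
          have : f (q - 1) ≫ φ' = (f (q - 1) ≫ eqToHom (congrArg X (by ring : q - 1 + 1 = q)))
              ≫ eT.hom ≫ φ := by simp [hφ']
          rw [this]
          apply ih (q - 1) (X (q - 1)) (by omega)
            ⟨by omega, X, f, A, g, hh, hz, ⟨Iso.refl _⟩, fun i hi hi' => htri i hi (by omega)⟩
            (by omega)
        obtain ⟨ψ, hψ⟩ := Triangle.yoneda_exact₂ _ htr.1 φ' h1
        have hψ0 : ψ = 0 := hom_pure_filt hvan htr.2 hW (by omega) ψ
        have h2 : φ' = 0 := by rw [hψ, hψ0, comp_zero]; rfl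
        have hφeq : φ = eT.inv ≫ eqToHom (congrArg X (by ring : q = q - 1 + 1)) ≫ φ' := by
          rw [hφ']
          simp
        rw [hφeq, h2, comp_zero, comp_zero]
  have hle := hT.le
  exact key (q - p).toNat q T (by omega) hT hqm φ

end Vanishing


section TLemmas

variable (t : TStructure C)

lemma t_zero {p q : ℤ} (hpq : p < q) {P Q : C} (hP : t.le p P) (hQ : t.ge q Q)
    (φ : P ⟶ Q) : φ = 0 := by
  have hP' : t.le 0 (P⟦p⟧) := t.le_shift p p 0 (by ring) P hP
  have hQ' : t.ge (q - p) (Q⟦p⟧) := t.ge_shift q p (q - p) (by ring) Q hQ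
  have hQ'' : t.ge 1 (Q⟦p⟧) := t.ge_antitone (by omega) _ hQ'
  have h0 : (shiftFunctor C p).map φ = 0 := t.zero' _ hP' hQ''
  apply (shiftFunctor C p).map_injective
  rw [h0, Functor.map_zero]

lemma t_le_ext {n : ℤ} (T : Triangle C) (hT : T ∈ distTriang C)
    (h₁ : t.le n T.obj₁) (h₃ : t.le n T.obj₃) : t.le n T.obj₂ := by
  obtain ⟨B', B'', hB', hB'', u, v, w, mem⟩ := t.exists_triangle T.obj₂ n (n + 1) rfl
  -- v : T.obj₂ ⟶ B'' is zero
  have hv1 : T.mor₁ ≫ v = 0 := t_zero t (by omega) h₁ hB'' _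
  obtain ⟨c, hc⟩ := Triangle.yoneda_exact₂ _ hT v hv1
  have hc0 : c = 0 := t_zero t (by omega) h₃ hB'' c
  have hv : v = 0 := by rw [hc, hc0, comp_zero]
  -- B'' is zero
  have hzB'' : IsZero B'' := by
    obtain ⟨gg, hgg⟩ := Triangle.yoneda_exact₂ _ (rot_of_distTriang _ mem) (𝟙 B'')
      (by dsimp only [Triangle.rotate, Triangle.mk]; rw [hv, zero_comp]; rfl)
    have hgg0 : gg = 0 := t_zero t (by omega : n - 1 < n + 1)
      (t.le_shift n 1 (n - 1) (by ring) B' hB') hB'' gg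
    rw [IsZero.iff_id_eq_zero, hgg, hgg0, comp_zero]; rfl
  have : IsIso u := by
    have := Triangle.isZero₃_iff_isIso₁ _ mem
    exact this.1 hzB''
  exact (t.le n).prop_of_iso (asIso u) hB'

lemma t_ge_ext {n : ℤ} (T : Triangle C) (hT : T ∈ distTriang C)
    (h₁ : t.ge n T.obj₁) (h₃ : t.ge n T.obj₃) : t.ge n T.obj₂ := by
  obtain ⟨B', B'', hB', hB'', u, v, w, mem⟩ := t.exists_triangle T.obj₂ (n - 1) n (by ring)
  -- u : B' ⟶ T.obj₂ is zero
  have hu1 : u ≫ T.mor₂ = 0 := t_zero t (by omega) hB' h₃ _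
  obtain ⟨c, hc⟩ := Triangle.coyoneda_exact₂ _ hT u hu1
  have hc0 : c = 0 := t_zero t (by omega) hB' h₁ c
  have hu : u = 0 := by rw [hc, hc0, zero_comp]
  -- B' is zero
  have hzB' : IsZero B' := by
    obtain ⟨gg, hgg⟩ := Triangle.coyoneda_exact₂ _ (inv_rot_of_distTriang _ mem) (𝟙 B')
      (by dsimp only [Triangle.invRotate, Triangle.mk]; rw [hu, comp_zero]; rfl)
    have hgg0 : gg = 0 := t_zero t (by omega : n - 1 < n + 1) hB'
      (t.ge_shift n (-1) (n + 1) (by ring) B'' hB'') gg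
    rw [IsZero.iff_id_eq_zero, hgg, hgg0, zero_comp]; rfl
  have : IsIso v := by
    have := Triangle.isZero₁_iff_isIso₂ _ mem
    exact this.1 hzB'
  exact (t.ge n).prop_of_iso (asIso v).symm hB''

end TLemmas


section Tower

variable (t : TStructure C) (E : C) (b : ℤ)

/-- the tower of truncations `... ⟶ TD (k+1) ⟶ TD k ⟶ ... ⟶ TD 0 = E`. -/
noncomputable def TD (k : ℕ) : C :=
  Nat.rec E (fun k Dk => (t.exists_triangle Dk (b - (k : ℤ) - 1) ((b - (k : ℤ) - 1) + 1)
    rfl).choose) k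

noncomputable def TA (k : ℕ) : C :=
  (t.exists_triangle (TD t E b k) (b - (k : ℤ) - 1) ((b - (k : ℤ) - 1) + 1)
    rfl).choose_spec.choose

lemma TD_LE (k : ℕ) : t.le (b - (k : ℤ) - 1) (TD t E b (k + 1)) :=
  (t.exists_triangle (TD t E b k) (b - (k : ℤ) - 1) ((b - (k : ℤ) - 1) + 1)
    rfl).choose_spec.choose_spec.choose

lemma TA_GE (k : ℕ) : t.ge ((b - (k : ℤ) - 1) + 1) (TA t E b k) :=
  (t.exists_triangle (TD t E b k) (b - (k : ℤ) - 1) ((b - (k : ℤ) - 1) + 1)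
    rfl).choose_spec.choose_spec.choose_spec.choose

noncomputable def Tu (k : ℕ) : TD t E b (k + 1) ⟶ TD t E b k :=
  (t.exists_triangle (TD t E b k) (b - (k : ℤ) - 1) ((b - (k : ℤ) - 1) + 1)
    rfl).choose_spec.choose_spec.choose_spec.choose_spec.choose

noncomputable def Tv (k : ℕ) : TD t E b k ⟶ TA t E b k :=
  (t.exists_triangle (TD t E b k) (b - (k : ℤ) - 1) ((b - (k : ℤ) - 1) + 1)
    rfl).choose_spec.choose_spec.choose_spec.choose_spec.choose_spec.choose

noncomputable def Tw (k : ℕ) : TA t E b k ⟶ (TD t E b (k + 1))⟦(1 : ℤ)⟧ :=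
  (t.exists_triangle (TD t E b k) (b - (k : ℤ) - 1) ((b - (k : ℤ) - 1) + 1)
    rfl).choose_spec.choose_spec.choose_spec.choose_spec.choose_spec.choose_spec.choose

lemma Tdist (k : ℕ) : Triangle.mk (Tu t E b k) (Tv t E b k) (Tw t E b k) ∈ distTriang C :=
  (t.exists_triangle (TD t E b k) (b - (k : ℤ) - 1) ((b - (k : ℤ) - 1) + 1)
    rfl).choose_spec.choose_spec.choose_spec.choose_spec.choose_spec.choose_spec.choose_spec

variable {t E b}

lemma TD_inv {a : ℤ} (hGE : t.ge a E) (hLE : t.le b E) :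
    ∀ k : ℕ, (k : ℤ) ≤ b - a + 1 → t.le (b - (k : ℤ)) (TD t E b k) ∧ t.ge a (TD t E b k) := by
  intro k
  induction k with
  | zero =>
      intro _
      constructor
      · simp only [Nat.cast_zero, sub_zero]; exact hLE
      · exact hGE
  | succ k ih =>
      intro hk
      have hk' : (k : ℤ) ≤ b - a + 1 := by push_cast at hk ⊢; omega
      constructor
      · have := TD_LE t E b k
        rw [show (b - ((k : ℕ) + 1 : ℕ) : ℤ) = b - (k : ℤ) - 1 by push_cast; ring]
        exact this
      · refine t_ge_ext t (Triangle.mk (Tu t E b k) (Tv t E b k) (Tw t E b k)).invRotate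
          (inv_rot_of_distTriang _ (Tdist t E b k)) ?_ ?_
        · dsimp only [Triangle.invRotate, Triangle.mk]
          have h1 : t.ge ((b - (k : ℤ) - 1) + 1 + 1) ((TA t E b k)⟦(-1 : ℤ)⟧) :=
            t.ge_shift _ (-1) _ (by ring) _ (TA_GE t E b k)
          exact t.ge_antitone (by push_cast at hk; omega) _ h1
        · exact (ih hk').2

lemma TA_heart {a : ℤ} (hGE : t.ge a E) (hLE : t.le b E) (k : ℕ)
    (hk : (k : ℤ) ≤ b - a) (c : ℤ) (hc : c = b - (k : ℤ)) :
    (TA t E b k)⟦c⟧ ∈ heartSet t := by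
  have hLEA : t.le (b - (k : ℤ)) (TA t E b k) := by
    refine t_le_ext t (Triangle.mk (Tu t E b k) (Tv t E b k) (Tw t E b k)).rotate
      (rot_of_distTriang _ (Tdist t E b k)) ?_ ?_
    · exact (TD_inv hGE hLE k (by omega)).1
    · dsimp only [Triangle.rotate, Triangle.mk]
      have h1 : t.le (b - (k : ℤ) - 1 - 1) ((TD t E b (k + 1))⟦(1 : ℤ)⟧) :=
        t.le_shift _ 1 _ (by ring) _ (TD_LE t E b k)
      exact t.le_monotone (by omega) _ h1
  have hGEA : t.ge (b - (k : ℤ)) (TA t E b k) := by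
    have := TA_GE t E b k
    rw [show (b - (k : ℤ) - 1) + 1 = b - (k : ℤ) by ring] at this
    exact this
  exact ⟨t.le_shift _ c 0 (by omega) _ hLEA, t.ge_shift _ c 0 (by omega) _ hGEA⟩

lemma TD_isZero {a : ℤ} (hGE : t.ge a E) (hLE : t.le b E) (hab : a ≤ b) :
    IsZero (TD t E b (b - a + 1).toNat) := by
  have hK : ((b - a + 1).toNat : ℤ) = b - a + 1 := by omega
  have h := TD_inv hGE hLE (b - a + 1).toNat (by omega)
  rw [IsZero.iff_id_eq_zero]
  exact t_zero t (show b - ((b - a + 1).toNat : ℤ) < a by omega) h.1 h.2 _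


lemma forward_filt {a : ℤ} (hGE : t.ge a E) (hLE : t.le b E) (hab : a ≤ b) :
    Filt (heartSet t) (a - 1) b E := by
  refine ⟨by omega, fun i => TD t E b (b - i).toNat,
    fun i => if h : i < b then
        eqToHom (congrArg (TD t E b) (show (b - i).toNat = (b - i - 1).toNat + 1 by omega)) ≫
        Tu t E b ((b - i - 1).toNat) ≫
        eqToHom (congrArg (TD t E b) (show (b - i - 1).toNat = (b - (i + 1)).toNat by omega))
      else eqToHom (congrArg (TD t E b) (show (b - i).toNat = (b - (i + 1)).toNat by omega)),
    fun i => TA t E b ((b - i).toNat),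
    fun i => if h : i < b then
        eqToHom (congrArg (TD t E b) (show (b - (i + 1)).toNat = (b - i - 1).toNat by omega)) ≫
        Tv t E b ((b - i - 1).toNat) ≫
        eqToHom (congrArg (TA t E b) (show (b - i - 1).toNat = (b - (i + 1)).toNat by omega))
      else 0,
    fun i => if h : i < b then
        eqToHom (congrArg (TA t E b) (show (b - (i + 1)).toNat = (b - i - 1).toNat by omega)) ≫
        Tw t E b ((b - i - 1).toNat) ≫
        (shiftFunctor C (1 : ℤ)).map
          (eqToHom (congrArg (TD t E b) (show (b - i - 1).toNat + 1 = (b - i).toNat by omega)))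
      else 0, ?_, ?_, ?_⟩
  · beta_reduce
    rw [show (b - (a - 1) : ℤ) = b - a + 1 by ring]
    exact TD_isZero hGE hLE hab
  · exact ⟨eqToIso (congrArg (TD t E b) (show (b - b).toNat = 0 by omega)) ≪≫ Iso.refl E⟩
  · intro i hi hi'
    constructor
    · beta_reduce
      rw [dif_pos hi', dif_pos hi', dif_pos hi']
      refine isomorphic_distinguished _ (Tdist t E b ((b - i - 1).toNat)) _ ?_
      refine Triangle.isoMk _ _
        (eqToIso (congrArg (TD t E b) (show (b - i).toNat = (b - i - 1).toNat + 1 by omega)))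
        (eqToIso (congrArg (TD t E b) (show (b - (i + 1)).toNat = (b - i - 1).toNat by omega)))
        (eqToIso (congrArg (TA t E b) (show (b - (i + 1)).toNat = (b - i - 1).toNat by omega)))
        ?_ ?_ ?_
      · dsimp only [Triangle.mk]
        simp
      · dsimp only [Triangle.mk]
        simp
      · dsimp only [Triangle.mk]
        simp [eqToHom_map]
    · beta_reduce
      exact TA_heart hGE hLE ((b - (i + 1)).toNat) (by omega) (i + 1) (by omega)

end Tower


section Reverse

variable (𝒜 : Set C)

def myLE (n : ℤ) (E : C) : Prop := ∃ m : ℤ, Filt 𝒜 m n E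

def myGE (n : ℤ) (E : C) : Prop := ∀ T : C, myLE 𝒜 (n - 1) T → ∀ f : T ⟶ E, f = 0

variable {𝒜}
variable (hiso : ∀ ⦃X Y : C⦄, (X ≅ Y) → X ∈ 𝒜 → Y ∈ 𝒜)
variable {Z : C} (hZA : Z ∈ 𝒜) (hZz : IsZero Z)
variable (hvan : ∀ A ∈ 𝒜, ∀ B ∈ 𝒜, ∀ k : ℤ, k < 0 → ∀ f : A ⟶ B⟦k⟧, f = 0)

lemma myLE_of_isZero {E : C} (hE : IsZero E) (n : ℤ) : myLE 𝒜 n E :=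
  ⟨n, Filt.of_isZero hE n⟩

lemma myGE_of_isZero {E : C} (hE : IsZero E) (n : ℤ) : myGE 𝒜 n E :=
  fun _ _ f => hE.eq_of_tgt f 0

include hiso hZA hZz in
lemma myLE_mono {n n' : ℤ} (h : n ≤ n') {E : C} (hE : myLE 𝒜 n E) : myLE 𝒜 n' E := by
  obtain ⟨m, hf⟩ := hE
  exact ⟨m, Filt.mono hiso hZA hZz hf h⟩

include hiso hZA hZz in
lemma myzero {p q : ℤ} (hpq : p < q) {P Q : C} (hP : myLE 𝒜 p P) (hQ : myGE 𝒜 q Q)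
    (φ : P ⟶ Q) : φ = 0 := by
  obtain ⟨m, hf⟩ := hP
  exact hQ P ⟨m, Filt.mono hiso hZA hZz hf (by omega)⟩ φ

include hiso in
lemma myLE_shift {n a n' : ℤ} (h : a + n' = n) {X : C} (hX : myLE 𝒜 n X) :
    myLE 𝒜 n' (X⟦a⟧) := by
  obtain ⟨m, hf⟩ := hX
  refine ⟨m - a, ?_⟩
  have := Filt.shiftFilt hiso hf a
  rw [show n - a = n' by omega] at this
  exact this

include hiso in
lemma myGE_shift {n a n' : ℤ} (h : a + n' = n) {X : C} (hX : myGE 𝒜 n X) :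
    myGE 𝒜 n' (X⟦a⟧) := by
  intro T hT φ
  have hT' : myLE 𝒜 (n - 1) (T⟦(-a : ℤ)⟧) := by
    have := myLE_shift hiso (show (-a) + (n' - 1 - (-a)) = n' - 1 by ring) hT
    rw [show n' - 1 - (-a) = n - 1 by omega] at this
    exact this
  have h0 : (shiftFunctor C (-a)).map φ ≫
      ((shiftFunctorCompIsoId C a (-a) (by ring)).hom.app X) = 0 := hX _ hT' _
  apply (shiftFunctor C (-a)).map_injective
  rw [Functor.map_zero]
  have := congrArg (fun ψ => ψ ≫ ((shiftFunctorCompIsoId C a (-a) (by ring)).inv.app X)) h0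
  simpa using this

variable (hb : ∀ E : C, ¬ IsZero E →
  ∃ (m n : ℤ), m ≤ n ∧
    ∃ (X : ℤ → C) (f : ∀ i : ℤ, X i ⟶ X (i + 1)) (A : ℤ → C)
      (g : ∀ i : ℤ, X (i + 1) ⟶ A (i + 1))
      (h : ∀ i : ℤ, A (i + 1) ⟶ (X i)⟦(1 : ℤ)⟧),
    IsZero (X m) ∧ Nonempty (X n ≅ E) ∧
    ∀ i : ℤ, m ≤ i → i < n →
      (Triangle.mk (f i) (g i) (h i) ∈ distTriang C) ∧
        (A (i + 1))⟦i + 1⟧ ∈ 𝒜)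

include hiso hZA hZz hvan hb in
lemma my_exists_triangle (A : C) : ∃ (X Y : C) (_ : myLE 𝒜 0 X) (_ : myGE 𝒜 1 Y)
    (f : X ⟶ A) (g : A ⟶ Y) (h : Y ⟶ X⟦(1 : ℤ)⟧), Triangle.mk f g h ∈ distTriang C := by
  by_cases hA0 : IsZero A
  · exact ⟨A, 0, myLE_of_isZero hA0 0, myGE_of_isZero (isZero_zero C) 1, 𝟙 A, 0, 0,
      contractible_distinguished A⟩
  obtain ⟨m, n, hmn, X, f, A_, g, hh, hz, ⟨eA⟩, htri⟩ := hb A hA0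
  have hfiltA : Filt 𝒜 m n A := ⟨hmn, X, f, A_, g, hh, hz, ⟨eA⟩, htri⟩
  by_cases hn : n ≤ 0
  · exact ⟨A, 0, ⟨m, Filt.mono hiso hZA hZz hfiltA hn⟩, myGE_of_isZero (isZero_zero C) 1,
      𝟙 A, 0, 0, contractible_distinguished A⟩
  by_cases hm : 0 ≤ m
  · refine ⟨0, A, myLE_of_isZero (isZero_zero C) 0, ?_, 0, 𝟙 A, 0,
      contractible_distinguished₁ A⟩
    intro T hT φ
    obtain ⟨p, hfT⟩ := hT
    exact hom_filt_filt hvan hfT hfiltA (by have := hfT.le; omega) φ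
  -- now m < 0 < n
  push_neg at hn hm
  have hB : myLE 𝒜 0 (X 0) :=
    ⟨m, by omega, X, f, A_, g, hh, hz, ⟨Iso.refl _⟩, fun i hi hi' => htri i hi (by omega)⟩
  -- the canonical maps up the tower
  let c : ∀ k : ℕ, (X 0 ⟶ X (k : ℤ)) := fun k =>
    Nat.rec (eqToHom (congrArg X (show (0 : ℤ) = ((0 : ℕ) : ℤ) by norm_num)))
      (fun k ih => ih ≫ f (k : ℤ) ≫
        eqToHom (congrArg X (show ((k : ℤ) + 1) = ((k + 1 : ℕ) : ℤ) by push_cast; ring))) k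
  have hc0 : c 0 = eqToHom (congrArg X (show (0 : ℤ) = ((0 : ℕ) : ℤ) by norm_num)) := rfl
  have hc : ∀ k : ℕ, c (k + 1) = c k ≫ f (k : ℤ) ≫
      eqToHom (congrArg X (show ((k : ℤ) + 1) = ((k + 1 : ℕ) : ℤ) by push_cast; ring)) :=
    fun k => rfl
  -- maps into the pure factors vanish
  have hAv : ∀ (T' : C), myLE 𝒜 0 T' → ∀ j : ℤ, 0 ≤ j → j < n →
      ∀ χ : T' ⟶ A_ (j + 1), χ = 0 := by
    intro T' hT' j hj0 hjn χ
    obtain ⟨p, hfT⟩ := hT'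
    exact hom_filt_filt hvan hfT (filt_pure (htri j (by omega) hjn).2) (by omega) χ
  -- surjectivity of Hom(T', X 0) → Hom(T', X k)
  have surj : ∀ k : ℕ, (k : ℤ) ≤ n → ∀ (T' : C), myLE 𝒜 0 T' → ∀ u : T' ⟶ X (k : ℤ),
      ∃ v : T' ⟶ X 0, v ≫ c k = u := by
    intro k
    induction k with
    | zero =>
        intro _ T' _ u
        refine ⟨u ≫ eqToHom (congrArg X (show ((0 : ℕ) : ℤ) = (0 : ℤ) by norm_num)), ?_⟩
        rw [hc0]
        simp
    | succ k ih =>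
        intro hk T' hT' u
        have hkn : (k : ℤ) < n := by push_cast at hk; omega
        have htr := htri (k : ℤ) (by omega) hkn
        set u' : T' ⟶ X ((k : ℤ) + 1) :=
          u ≫ eqToHom (congrArg X (show ((k + 1 : ℕ) : ℤ) = ((k : ℤ) + 1) by push_cast; ring))
          with hu'
        have hgu : u' ≫ g (k : ℤ) = 0 := hAv T' hT' (k : ℤ) (by positivity) hkn _
        obtain ⟨w, hw⟩ := Triangle.coyoneda_exact₂ _ htr.1 u' hgu
        have hw' : u' = w ≫ f (k : ℤ) := hw
        obtain ⟨v, hv⟩ := ih (by omega) T' hT' w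
        refine ⟨v, ?_⟩
        rw [hc k]
        have hXeq : X ((k : ℤ) + 1) = X (((k + 1 : ℕ)) : ℤ) := congrArg X (by push_cast; ring)
        calc v ≫ c k ≫ f (k : ℤ) ≫ eqToHom hXeq
            = (v ≫ c k) ≫ f (k : ℤ) ≫ eqToHom hXeq := by simp only [Category.assoc]
          _ = w ≫ f (k : ℤ) ≫ eqToHom hXeq := by rw [hv]; rfl
          _ = u' ≫ eqToHom hXeq := by rw [hw']; exact (Category.assoc _ _ _).symm
          _ = u := by rw [hu']; simp
  -- injectivity of Hom(T', (X 0)[1]) → Hom(T', (X k)[1])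
  have inj : ∀ k : ℕ, (k : ℤ) ≤ n → ∀ (T' : C), myLE 𝒜 0 T' → ∀ w : T' ⟶ (X 0)⟦(1 : ℤ)⟧,
      w ≫ (shiftFunctor C (1 : ℤ)).map (c k) = 0 → w = 0 := by
    intro k
    induction k with
    | zero =>
        intro _ T' _ w hw
        rw [hc0] at hw
        simpa using hw
    | succ k ih =>
        intro hk T' hT' w hw
        have hkn : (k : ℤ) < n := by push_cast at hk; omega
        have htr := htri (k : ℤ) (by omega) hkn
        rw [hc k, Functor.map_comp, Functor.map_comp] at hw
        have hw2 : (w ≫ (shiftFunctor C (1 : ℤ)).map (c k)) ≫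
            (shiftFunctor C (1 : ℤ)).map (f (k : ℤ)) = 0 := by
          have := congrArg (fun ψ => ψ ≫ (shiftFunctor C (1 : ℤ)).map
            (eqToHom (congrArg X (show ((k + 1 : ℕ) : ℤ) = ((k : ℤ) + 1) by push_cast; ring)))) hw
          simpa [eqToHom_map] using this
        have hRdist := rot_of_distTriang _ (rot_of_distTriang _ htr.1)
        obtain ⟨χ, hχ⟩ := Triangle.coyoneda_exact₂ _ hRdist
          (w ≫ (shiftFunctor C (1 : ℤ)).map (c k)) (by
            dsimp only [Triangle.rotate, Triangle.mk]
            simp [hw2]; rfl)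
        have hχ0 : χ = 0 := hAv T' hT' (k : ℤ) (by positivity) hkn χ
        have hw3 : w ≫ (shiftFunctor C (1 : ℤ)).map (c k) = 0 := by
          exact hχ.trans (by rw [hχ0]; exact zero_comp)
        exact ih (by omega) T' hT' w hw3
  -- the map φ : X 0 ⟶ A and its cone
  set φ : X 0 ⟶ A := c n.toNat ≫
    eqToHom (congrArg X (show ((n.toNat : ℕ) : ℤ) = n by omega)) ≫ eA.hom with hφ
  obtain ⟨Y, d, e, hTd⟩ := distinguished_cocone_triangle φ
  refine ⟨X 0, Y, hB, ?_, φ, d, e, hTd⟩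
  intro T hT ψ
  have hT0 : myLE 𝒜 0 T := by
    obtain ⟨p, hfT⟩ := hT
    rw [show (1 : ℤ) - 1 = 0 by norm_num] at hfT
    exact ⟨p, hfT⟩
  have he1 : ψ ≫ e ≫ (shiftFunctor C (1 : ℤ)).map φ = 0 := by
    have := comp_distTriang_mor_zero₃₁ _ hTd
    dsimp only [Triangle.mk] at this
    rw [this]; exact comp_zero
  have h3 : (ψ ≫ e) ≫ (shiftFunctor C (1 : ℤ)).map (c n.toNat) = 0 := by
    rw [← cancel_mono ((shiftFunctor C (1 : ℤ)).map
      (eqToHom (congrArg X (show ((n.toNat : ℕ) : ℤ) = n by omega)) ≫ eA.hom))]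
    rw [zero_comp]
    rw [hφ] at he1
    simpa [Functor.map_comp] using he1
  have h4 : ψ ≫ e = 0 := inj n.toNat (by omega) T hT0 (ψ ≫ e) h3
  obtain ⟨ρ, hρ⟩ := Triangle.coyoneda_exact₃ _ hTd ψ h4
  obtain ⟨v, hv⟩ := surj n.toNat (by omega) T hT0
    (ρ ≫ eA.inv ≫ eqToHom (congrArg X (show n = ((n.toNat : ℕ) : ℤ) by omega)))
  have hρ2 : ρ = v ≫ φ := by
    rw [hφ]
    simp only [← Category.assoc]
    rw [hv]
    simp only [Category.assoc]
    erw [Category.assoc]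
    simp
    exact ((congrArg (fun x => ρ ≫ x) eA.inv_hom_id).trans (Category.comp_id ρ)).symm
  have h12 : φ ≫ d = 0 := comp_distTriang_mor_zero₁₂ _ hTd
  rw [hρ, hρ2]
  dsimp only [Triangle.mk]
  rw [Category.assoc, h12, comp_zero]

include hiso hZA hZz hvan hb in
lemma mkT_exists : ∃ t : TStructure C,
    (∀ n X, t.le n X ↔ myLE 𝒜 n X) ∧ (∀ n X, t.ge n X ↔ myGE 𝒜 n X) := by
  refine ⟨{
    le := fun n X => myLE 𝒜 n X
    ge := fun n X => myGE 𝒜 n X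
    le_isClosedUnderIsomorphisms := fun n => ⟨fun e hX => by
      obtain ⟨m, hf⟩ := hX
      exact ⟨m, hf.of_iso e⟩⟩
    ge_isClosedUnderIsomorphisms := fun n => ⟨fun e hX T hT φ => by
      have h0 := hX T hT (φ ≫ e.inv)
      have : φ = (φ ≫ e.inv) ≫ e.hom := by simp
      rw [this, h0, zero_comp]⟩
    le_shift := fun n a n' h X hX => myLE_shift hiso h hX
    ge_shift := fun n a n' h X hX => myGE_shift hiso h hX
    zero' := fun X Y φ hX hY => hY X (by rw [show (1 : ℤ) - 1 = 0 by norm_num]; exact hX) φ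
    le_zero_le := fun X hX => myLE_mono hiso hZA hZz (by norm_num) hX
    ge_one_le := fun X hX T hT φ => hX T (myLE_mono hiso hZA hZz (by norm_num) hT) φ
    exists_triangle_zero_one := fun A => my_exists_triangle hiso hZA hZz hvan hb A }, ?_, ?_⟩
  · intro n X
    exact Iff.rfl
  · intro n X
    exact Iff.rfl

include hiso hZA hZz hvan in
lemma myheart : ∀ E : C, (myLE 𝒜 0 E ∧ myGE 𝒜 0 E) ↔ E ∈ 𝒜 := by
  intro E
  constructor
  · rintro ⟨hLE0, hGE0⟩
    obtain ⟨m, hf⟩ := hLE0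
    by_cases hm : 0 ≤ m
    · -- then m = 0 and E is zero
      have hmz : m = 0 := le_antisymm hf.le hm
      subst hmz
      exact hiso (hZz.iso hf.isZero) hZA
    · push_neg at hm
      obtain ⟨hm0, X, f, A_, g, hh, hz, ⟨eE⟩, htri⟩ := hf
      have htr := htri (-1) (by omega) (by omega)
      have hXeq : X (-1 + 1) = X 0 := congrArg X (by norm_num)
      have hXm1 : myLE 𝒜 (-1) (X (-1)) :=
        ⟨m, by omega, X, f, A_, g, hh, hz, ⟨Iso.refl _⟩, fun i hi hi' => htri i hi (by omega)⟩
      -- the map f (-1) is zero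
      have hf1 : f (-1) = 0 := by
        have h0 := hGE0 (X (-1)) (by rw [show (0 : ℤ) - 1 = -1 by norm_num]; exact hXm1)
          (f (-1) ≫ eqToHom hXeq ≫ eE.hom)
        have : f (-1) = (f (-1) ≫ eqToHom hXeq ≫ eE.hom) ≫ eE.inv ≫ eqToHom hXeq.symm := by
          simp
        rw [this, h0, zero_comp]
      -- X (-1) is zero
      have hzX1 : IsZero (X (-1)) := by
        obtain ⟨γ, hγ⟩ := Triangle.coyoneda_exact₂ _
          (inv_rot_of_distTriang _ htr.1) (𝟙 (X (-1))) (by dsimp only [Triangle.invRotate, Triangle.mk]; rw [hf1, comp_zero]; rfl)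
        have hWpure : ((A_ (-1 + 1))⟦(-1 : ℤ)⟧)⟦(1 : ℤ)⟧ ∈ 𝒜 :=
          hiso ((shiftFunctorAdd' C (-1) 1 (-1 + 1) rfl).app (A_ (-1 + 1))) htr.2
        have hγ0 : γ = 0 := by
          refine hom_filt_filt hvan
            (⟨by omega, X, f, A_, g, hh, hz, ⟨Iso.refl _⟩, fun i hi hi' => htri i hi (by omega)⟩ :
              Filt 𝒜 m (-1) (X (-1))) (filt_pure hWpure) (by omega) γ
        rw [IsZero.iff_id_eq_zero, hγ, hγ0, zero_comp]; rfl
      have hiso2 : IsIso (g (-1)) :=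
        (Triangle.isZero₁_iff_isIso₂ _ htr.1).1 hzX1
      have etotal : (A_ (-1 + 1))⟦(-1 : ℤ) + 1⟧ ≅ E :=
        ((shiftFunctorZero' C ((-1 : ℤ) + 1) (by norm_num)).app (A_ (-1 + 1))) ≪≫
          (asIso (g (-1))).symm ≪≫ eqToIso hXeq ≪≫ eE
      exact hiso etotal htr.2
  · intro hA
    have hE0A : E⟦(0 : ℤ)⟧ ∈ 𝒜 := hiso ((shiftFunctorZero C ℤ).symm.app E) hA
    have hfE : Filt 𝒜 (-1) 0 E := by
      have := filt_pure hE0A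
      rw [show (0 : ℤ) - 1 = -1 by norm_num] at this
      exact this
    constructor
    · exact ⟨-1, hfE⟩
    · intro T hT φ
      obtain ⟨p, hfT⟩ := hT
      exact hom_filt_filt hvan hfT hfE (by omega) φ

include hvan in
lemma my_bounded {E : C} (hE : ¬ IsZero E) (h : ∃ m n : ℤ, Filt 𝒜 m n E) :
    ∃ a b : ℤ, myGE 𝒜 a E ∧ myLE 𝒜 b E := by
  obtain ⟨m, n, hf⟩ := h
  refine ⟨m + 1, n, ?_, ⟨m, hf⟩⟩
  intro T hT φ
  obtain ⟨p, hfT⟩ := hT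
  exact hom_filt_filt hvan hfT hf (by omega) φ

end Reverse

end HeartAux2


open HeartAux HeartAux2

/-- A (strictly) full additive subcategory `𝒜` of a triangulated category `𝒟` is the
heart of a bounded t-structure on `𝒟` if and only if:
(a) for all objects `A, B` of `𝒜` and all `k < 0`, `Hom(A, B⟦k⟧) = 0`; and
(b) every nonzero object `E` of `𝒟` admits a finite filtration by distinguished
triangles `0 = E_m → E_{m+1} → ⋯ → E_n ≅ E` whose factors `A_i` (the cones of
`E_{i-1} → E_i`) satisfy `A_i⟦i⟧ ∈ 𝒜`. -/
theorem heart_of_bounded_tstructure_iff (𝒜 : Set C)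
    (hiso : ∀ ⦃X Y : C⦄, (X ≅ Y) → X ∈ 𝒜 → Y ∈ 𝒜)
    (hzero : ∃ Z ∈ 𝒜, IsZero Z) :
    (∃ t : TStructure C, TStructureIsBounded t ∧ heartSet t = 𝒜) ↔
      ((∀ A ∈ 𝒜, ∀ B ∈ 𝒜, ∀ k : ℤ, k < 0 → ∀ f : A ⟶ B⟦k⟧, f = 0) ∧
        (∀ E : C, ¬ IsZero E →
          ∃ (m n : ℤ), m ≤ n ∧
            ∃ (X : ℤ → C) (f : ∀ i : ℤ, X i ⟶ X (i + 1)) (A : ℤ → C)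
              (g : ∀ i : ℤ, X (i + 1) ⟶ A (i + 1))
              (h : ∀ i : ℤ, A (i + 1) ⟶ (X i)⟦(1 : ℤ)⟧),
            IsZero (X m) ∧ Nonempty (X n ≅ E) ∧
            ∀ i : ℤ, m ≤ i → i < n →
              (Triangle.mk (f i) (g i) (h i) ∈ distTriang C) ∧
                (A (i + 1))⟦i + 1⟧ ∈ 𝒜)) := by
  constructor
  · rintro ⟨t, tbdd, theart⟩
    constructor
    · intro A hA B hB k hk φ
      rw [← theart] at hA hB
      have hBk : t.ge (-k) (B⟦k⟧) := t.ge_shift 0 k (-k) (by ring) B hB.2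
      exact t_zero t (by omega) hA.1 hBk φ
    · intro E hE0
      obtain ⟨a, b, hGEa, hLEb⟩ := tbdd E
      have hLEb' : t.le (max b a) E := t.le_monotone (le_max_left b a) E hLEb
      have filt := forward_filt hGEa hLEb' (le_max_right b a)
      rw [theart] at filt
      exact ⟨a - 1, max b a, filt⟩
  · rintro ⟨hvan, hb⟩
    obtain ⟨Z, hZA, hZz⟩ := hzero
    obtain ⟨t, hLE, hGE⟩ := mkT_exists hiso hZA hZz hvan hb
    refine ⟨t, ?_, ?_⟩
    · intro X
      by_cases hX : IsZero X
      · exact ⟨0, 0, (hGE 0 X).2 (myGE_of_isZero hX 0), (hLE 0 X).2 (myLE_of_isZero hX 0)⟩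
      · obtain ⟨m, n, hmn, rest⟩ := hb X hX
        obtain ⟨a, b, h1, h2⟩ := my_bounded hvan hX ⟨m, n, hmn, rest⟩
        exact ⟨a, b, (hGE a X).2 h1, (hLE b X).2 h2⟩
    · ext E
      simp only [heartSet, Set.mem_setOf_eq]
      constructor
      · rintro ⟨h1, h2⟩
        exact (myheart hiso hZA hZz hvan E).1 ⟨(hLE 0 E).1 h1, (hGE 0 E).1 h2⟩
      · intro hE
        have h3 := (myheart hiso hZA hZz hvan E).2 hE
        exact ⟨(hLE 0 E).2 h3.1, (hGE 0 E).2 h3.2⟩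
end

section
/- Let 𝒜 be the heart of a bounded t-structure on a triangulated category 𝒟, and let (𝒯, ℱ) be a torsion pair in 𝒜. Then the full subcategory 𝒜^♯ = {E ∈ 𝒟 : H^i(E) = 0 for i ∉ {-1, 0}, H^{-1}(E) ∈ ℱ, H^0(E) ∈ 𝒯} is the heart of a bounded t-structure on 𝒟, where H^i denotes cohomology with respect to the given t-structure. -/
open CategoryTheory Limits Pretriangulated Triangulated

variable {C : Type*} [Category C] [Preadditive C] [HasZeroObject C] [HasShift C ℤ]
  [∀ n : ℤ, (shiftFunctor C n).Additive] [Pretriangulated C]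

namespace HRSTilt

lemma zero_hom_of_iso_src {X X' Y : C} (e : X' ≅ X) (h : ∀ f : X ⟶ Y, f = 0)
    (f : X' ⟶ Y) : f = 0 := by
  have : f = e.hom ≫ (e.inv ≫ f) := by simp
  rw [this, h (e.inv ≫ f), comp_zero]

lemma zero_hom_of_iso_tgt {X Y Y' : C} (e : Y ≅ Y') (h : ∀ f : X ⟶ Y, f = 0)
    (f : X ⟶ Y') : f = 0 := by
  have : f = (f ≫ e.inv) ≫ e.hom := by simp
  rw [this, h (f ≫ e.inv), zero_comp]

lemma zero_shift {X Y : C} (n : ℤ) (h : ∀ f : X ⟶ Y, f = 0)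
    (f : X⟦n⟧ ⟶ Y⟦n⟧) : f = 0 := by
  obtain ⟨g, rfl⟩ := (shiftFunctor C n).map_surjective f
  rw [h g, Functor.map_zero]

lemma zero_unshift {X Y : C} (n : ℤ) (h : ∀ f : X⟦n⟧ ⟶ Y⟦n⟧, f = 0)
    (f : X ⟶ Y) : f = 0 :=
  (shiftFunctor C n).map_injective (by rw [h ((shiftFunctor C n).map f), Functor.map_zero])

/-- transfer `Hom(X⟦1⟧, Y) = 0` to `Hom(X, Y⟦-1⟧) = 0` and back -/
lemma shift_one_neg_zero {X Y : C} :
    (∀ f : X⟦(1:ℤ)⟧ ⟶ Y, f = 0) ↔ (∀ f : X ⟶ Y⟦(-1:ℤ)⟧, f = 0) := by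
  have adj := (shiftEquiv C (1:ℤ)).toAdjunction
  constructor
  · intro h f
    have : f = adj.homEquiv X Y (adj.homEquiv X Y |>.symm f) := ((adj.homEquiv X Y).apply_symm_apply f).symm
    rw [this, h ((adj.homEquiv X Y).symm f)]
    haveI : (shiftEquiv C (1:ℤ)).functor.Additive := inferInstanceAs (shiftFunctor C (1:ℤ)).Additive
    exact adj.homAddEquiv_zero X Y
  · intro h f
    have : f = (adj.homEquiv X Y).symm (adj.homEquiv X Y f) := ((adj.homEquiv X Y).symm_apply_apply f).symm
    rw [this, h (adj.homEquiv X Y f)]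
    haveI : (shiftEquiv C (1:ℤ)).functor.Additive := inferInstanceAs (shiftFunctor C (1:ℤ)).Additive
    exact adj.homAddEquiv_symm_zero X Y

variable (t : TStructure C)

lemma zero_of_le_ge {a b : ℤ} (hab : a < b) {X Y : C} (hX : t.le a X) (hY : t.ge b Y)
    (f : X ⟶ Y) : f = 0 := by
  have hX' : t.le 0 (X⟦a⟧) := t.le_shift a a 0 (by omega) X hX
  have hY' : t.ge (b - a) (Y⟦a⟧) := t.ge_shift b a (b - a) (by omega) Y hY
  have hY'' : t.ge 1 (Y⟦a⟧) := t.ge_antitone (by omega : (1:ℤ) ≤ b - a) _ hY'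
  have : (shiftFunctor C a).map f = 0 := t.zero' _ hX' hY''
  exact (shiftFunctor C a).map_injective (by rw [this, Functor.map_zero])

lemma le_of_orth {n : ℤ} {X : C}
    (h : ∀ Z : C, t.ge (n + 1) Z → ∀ f : X ⟶ Z, f = 0) : t.le n X := by
  obtain ⟨X₁, X₂, h₁, h₂, f, g, m, mem⟩ := t.exists_triangle X n (n + 1) rfl
  obtain ⟨k, hk⟩ := Triangle.yoneda_exact₃ _ mem (𝟙 X₂) (by dsimp only [Triangle.mk, Triangle.invRotate, Triangle.rotate]; rw [Category.comp_id]; exact h _ h₂ g)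
  have hk0 : k = 0 :=
    zero_of_le_ge t (by omega : n - 1 < n + 1) (t.le_shift n 1 (n - 1) (by omega) _ h₁) h₂ k
  have hz : IsZero X₂ := by
    rw [IsZero.iff_id_eq_zero, hk, hk0, comp_zero]; rfl
  have : IsIso f := (Triangle.isZero₃_iff_isIso₁ _ mem).1 hz
  exact (t.le n).prop_of_iso (asIso f) h₁

lemma ge_of_orth {n : ℤ} {Y : C}
    (h : ∀ W : C, t.le (n - 1) W → ∀ f : W ⟶ Y, f = 0) : t.ge n Y := by
  obtain ⟨Y₁, Y₂, h₁, h₂, f, g, m, mem⟩ := t.exists_triangle Y (n - 1) n (by omega)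
  obtain ⟨k, hk⟩ := Triangle.coyoneda_exact₂ _ (inv_rot_of_distTriang _ mem) (𝟙 Y₁)
    (by dsimp only [Triangle.mk, Triangle.invRotate, Triangle.rotate]; rw [Category.id_comp]; exact h _ h₁ f)
  have hk0 : k = 0 :=
    zero_of_le_ge t (by omega : n - 1 < n + 1) h₁ (t.ge_shift n (-1) (n + 1) (by omega) _ h₂) k
  have hz : IsZero Y₁ := by
    rw [IsZero.iff_id_eq_zero, hk, hk0, zero_comp]; rfl
  have : IsIso g := (Triangle.isZero₁_iff_isIso₂ _ mem).1 hz
  exact (t.ge n).prop_of_iso (asIso g).symm h₂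

section Tilt

variable (𝒯 ℱ : Set C)

/-- the `≤ n` class of the tilted t-structure -/
def tLE (n : ℤ) (X : C) : Prop := t.le n X ∧ ∀ F ∈ ℱ, ∀ f : X⟦n⟧ ⟶ F, f = 0

/-- the `≥ n` class of the tilted t-structure -/
def tGE (n : ℤ) (Y : C) : Prop := t.ge (n - 1) Y ∧ ∀ T ∈ 𝒯, ∀ f : T ⟶ Y⟦n - 1⟧, f = 0

variable {t 𝒯 ℱ}

lemma tLE_iso {n : ℤ} {X Y : C} (e : X ≅ Y) (h : tLE t ℱ n X) : tLE t ℱ n Y :=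
  ⟨(t.le n).prop_of_iso e h.1,
    fun F hF f => zero_hom_of_iso_src ((shiftFunctor C n).mapIso e).symm (h.2 F hF) f⟩

lemma tGE_iso {n : ℤ} {X Y : C} (e : X ≅ Y) (h : tGE t 𝒯 n X) : tGE t 𝒯 n Y :=
  ⟨(t.ge (n - 1)).prop_of_iso e h.1,
    fun T hT f => zero_hom_of_iso_tgt ((shiftFunctor C (n - 1)).mapIso e) (h.2 T hT) f⟩

lemma tLE_shift (n a n' : ℤ) (h : a + n' = n) (X : C) (hX : tLE t ℱ n X) :
    tLE t ℱ n' (X⟦a⟧) :=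
  ⟨t.le_shift n a n' h X hX.1, fun F hF f =>
    zero_hom_of_iso_src ((shiftFunctorAdd' C a n' n h).app X).symm (hX.2 F hF) f⟩

lemma tGE_shift (n a n' : ℤ) (h : a + n' = n) (Y : C) (hY : tGE t 𝒯 n Y) :
    tGE t 𝒯 n' (Y⟦a⟧) :=
  ⟨t.ge_shift (n - 1) a (n' - 1) (by omega) Y hY.1, fun T hT f =>
    zero_hom_of_iso_tgt ((shiftFunctorAdd' C a (n' - 1) (n - 1) (by omega)).app Y)
      (hY.2 T hT) f⟩

lemma tLE_mono (hℱ : ℱ ⊆ heartSet t) : tLE t ℱ 0 ≤ tLE t ℱ 1 := fun X hX =>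
  ⟨t.le_zero_le X hX.1, fun F hF f =>
    zero_of_le_ge t (show (-1:ℤ) < 0 by omega)
      (t.le_shift 0 1 (-1) (by omega) X hX.1) (hℱ hF).2 f⟩

lemma tGE_anti (h𝒯 : 𝒯 ⊆ heartSet t) : tGE t 𝒯 1 ≤ tGE t 𝒯 0 := fun Y hY =>
  ⟨t.ge_antitone (by omega : (0:ℤ) - 1 ≤ 1 - 1) Y hY.1, fun T hT f =>
    zero_of_le_ge t (show (0:ℤ) < 1 by omega) (h𝒯 hT).1
      (t.ge_shift (1 - 1) (0 - 1) 1 (by omega) Y hY.1) f⟩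

lemma tilt_zero'
    (hdecomp : ∀ E ∈ heartSet t, ∃ (T F : C), T ∈ 𝒯 ∧ F ∈ ℱ ∧
      ∃ (f : T ⟶ E) (g : E ⟶ F) (h : F ⟶ T⟦(1 : ℤ)⟧), Triangle.mk f g h ∈ distTriang C)
    ⦃X Y : C⦄ (f : X ⟶ Y) (hX : tLE t ℱ 0 X) (hY : tGE t 𝒯 1 Y) : f = 0 := by
  obtain ⟨X₁, H, hX₁, hHge, φ₁, φ₂, φ₃, memX⟩ := t.exists_triangle X (-1) 0 (by omega)
  have hHle : t.le 0 H := le_of_orth t (fun Z hZ ψ => by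
    have hZ1 : t.ge 1 Z := by simpa using hZ
    obtain ⟨k, hk⟩ := Triangle.yoneda_exact₃ _ memX ψ (t.zero' _ hX.1 hZ1)
    have hk0 : k = 0 := zero_of_le_ge t (show (-2:ℤ) < 1 by omega)
      (t.le_shift (-1) 1 (-2) (by omega) X₁ hX₁) hZ1 k
    rw [hk, hk0, comp_zero]; rfl)
  obtain ⟨T, F, hT, hF, u, v, w, memH⟩ := hdecomp H ⟨hHle, hHge⟩
  obtain ⟨h, hh⟩ := Triangle.yoneda_exact₂ _ memX f
    (zero_of_le_ge t (show (-1:ℤ) < 1 - 1 by omega) hX₁ hY.1 _)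
  have hu : u ≫ h = 0 :=
    zero_hom_of_iso_tgt ((shiftFunctorZero' C ((1:ℤ) - 1) (by omega)).app Y)
      (hY.2 T hT) (u ≫ h)
  obtain ⟨k, hkk⟩ := Triangle.yoneda_exact₂ _ memH h hu
  have hv : φ₂ ≫ v = 0 :=
    zero_hom_of_iso_src ((shiftFunctorZero C ℤ).app X).symm (hX.2 F hF) (φ₂ ≫ v)
  rw [hh, hkk]; dsimp only [Triangle.mk, Triangle.invRotate, Triangle.rotate]; erw [← Category.assoc, hv, zero_comp]

end Tilt


lemma tilt_exists_triangle
    (h𝒯 : 𝒯 ⊆ heartSet t) (hℱ : ℱ ⊆ heartSet t)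
    (hom_zero : ∀ (T F : C), T ∈ 𝒯 → F ∈ ℱ → ∀ f : T ⟶ F, f = 0)
    (hdecomp : ∀ E ∈ heartSet t, ∃ (T F : C), T ∈ 𝒯 ∧ F ∈ ℱ ∧
      ∃ (f : T ⟶ E) (g : E ⟶ F) (h : F ⟶ T⟦(1 : ℤ)⟧), Triangle.mk f g h ∈ distTriang C)
    (X : C) :
    ∃ (A B : C) (_ : tLE t ℱ 0 A) (_ : tGE t 𝒯 1 B)
      (f : A ⟶ X) (g : X ⟶ B) (h : B ⟶ A⟦(1:ℤ)⟧), Triangle.mk f g h ∈ distTriang C := by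
  obtain ⟨A₁, B₁, hA₁, hB₁, a, b, c, memX⟩ := t.exists_triangle X 0 1 rfl
  obtain ⟨A₂, H, hA₂, hHge, j, p, d, memA₁⟩ := t.exists_triangle A₁ (-1) 0 (by omega)
  have hHle : t.le 0 H := le_of_orth t (fun Z hZ ψ => by
    have hZ1 : t.ge 1 Z := by simpa using hZ
    obtain ⟨k, hk⟩ := Triangle.yoneda_exact₃ _ memA₁ ψ (t.zero' _ hA₁ hZ1)
    have hk0 : k = 0 := zero_of_le_ge t (show (-2:ℤ) < 1 by omega)
      (t.le_shift (-1) 1 (-2) (by omega) A₂ hA₂) hZ1 k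
    rw [hk, hk0, comp_zero]; rfl)
  obtain ⟨T, F, hT, hF, u, v, w, memH⟩ := hdecomp H ⟨hHle, hHge⟩
  obtain ⟨A, i, pr, memA⟩ := distinguished_cocone_triangle₂ (u ≫ d)
  obtain ⟨g, hg₁, hg₂⟩ := complete_distinguished_triangle_morphism₂
    (Triangle.mk i pr (u ≫ d)) (Triangle.mk j p d) memA memA₁ (𝟙 A₂) u
    (by erw [CategoryTheory.Functor.map_id, Category.comp_id]; rfl)
  change A ⟶ A₁ at g
  dsimp only [Triangle.mk, Triangle.invRotate, Triangle.rotate] at hg₁ hg₂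
  rw [Category.id_comp] at hg₁
  obtain ⟨B, β, γ, memB⟩ := distinguished_cocone_triangle (g ≫ a)
  have hpd : p ≫ d = 0 := comp_distTriang_mor_zero₂₃ _ memA₁
  have hqi : (u ≫ d) ≫ i⟦(1:ℤ)⟧' = 0 := comp_distTriang_mor_zero₃₁ _ memA
  have hγga : γ ≫ (g ≫ a)⟦(1:ℤ)⟧' = 0 := comp_distTriang_mor_zero₃₁ _ memB
  have hgaβ : (g ≫ a) ≫ β = 0 := comp_distTriang_mor_zero₁₂ _ memB
  -- membership of A in the tilted ≤ 0 class
  have hALE : t.le 0 A := le_of_orth t (fun Z hZ ψ => by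
    have hZ1 : t.ge 1 Z := by simpa using hZ
    obtain ⟨k, hk⟩ := Triangle.yoneda_exact₂ _ memA ψ
      (zero_of_le_ge t (show (-1:ℤ) < 1 by omega) hA₂ hZ1 _)
    have hk0 : k = 0 := t.zero' k (h𝒯 hT).1 hZ1
    rw [hk, hk0, comp_zero]; rfl)
  have hA : tLE t ℱ 0 A := by
    refine ⟨hALE, fun F' hF' f00 => ?_⟩
    refine zero_hom_of_iso_src ((shiftFunctorZero C ℤ).app A) ?_ f00
    intro f0
    obtain ⟨k, hk⟩ := Triangle.yoneda_exact₂ _ memA f0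
      (zero_of_le_ge t (show (-1:ℤ) < 0 by omega) hA₂ (hℱ hF').2 _)
    erw [hk, hom_zero T F' hT hF' k, comp_zero]; rfl
  -- the key Hom-vanishing chase for B
  have key : ∀ (U : C), (∀ f : U ⟶ B₁, f = 0) → (∀ f : U ⟶ F, f = 0) →
      ∀ φ : U ⟶ B, φ = 0 := by
    intro U c1 c2 φ
    have hbinj : ∀ ξ : U ⟶ A⟦(1:ℤ)⟧, ξ ≫ (g ≫ a)⟦(1:ℤ)⟧' = 0 → ξ = 0 := by
      intro ξ hξ
      have hθ : ξ ≫ g⟦(1:ℤ)⟧' = 0 := by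
        obtain ⟨k, hk⟩ := Triangle.coyoneda_exact₁ _ memX (ξ ≫ g⟦(1:ℤ)⟧')
          (by dsimp only [Triangle.mk, Triangle.invRotate, Triangle.rotate]; rw [Category.assoc, ← Functor.map_comp]; exact hξ)
        dsimp only [Triangle.mk, Triangle.invRotate, Triangle.rotate] at hk
        rw [hk, c1 k, zero_comp]
      have hpr : ξ ≫ pr⟦(1:ℤ)⟧' = 0 := by
        have h1 : (ξ ≫ pr⟦(1:ℤ)⟧') ≫ u⟦(1:ℤ)⟧' = 0 := by
          rw [Category.assoc, ← Functor.map_comp, hg₂, Functor.map_comp,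
            ← Category.assoc, hθ, zero_comp]
        obtain ⟨k, hk⟩ := Triangle.coyoneda_exact₁ _ memH (ξ ≫ pr⟦(1:ℤ)⟧')
          (by dsimp only [Triangle.mk, Triangle.invRotate, Triangle.rotate]; exact h1)
        dsimp only [Triangle.mk, Triangle.invRotate, Triangle.rotate] at hk
        rw [hk, c2 k, zero_comp]
      obtain ⟨χ, hχ⟩ := Triangle.coyoneda_exact₁ _ (rot_of_distTriang _ memA) ξ
        (by dsimp only [Triangle.mk, Triangle.invRotate, Triangle.rotate]; exact hpr)
      have hχ' : ξ = -(χ ≫ i⟦(1:ℤ)⟧') := by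
        rw [hχ]; dsimp only [Triangle.mk, Triangle.invRotate, Triangle.rotate]; erw [Preadditive.comp_neg]
      have h2 : χ ≫ (i⟦(1:ℤ)⟧' ≫ g⟦(1:ℤ)⟧') = 0 := by
        have h3 := hθ
        rw [hχ'] at h3
        erw [Preadditive.neg_comp, neg_eq_zero, Category.assoc] at h3
        exact h3
      have hχj : χ ≫ j⟦(1:ℤ)⟧' = 0 := by
        erw [← hg₁, Functor.map_comp, h2]
      obtain ⟨σ, hσ⟩ := Triangle.coyoneda_exact₁ _ memA₁ χ (by dsimp only [Triangle.mk, Triangle.invRotate, Triangle.rotate]; exact hχj)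
      dsimp only [Triangle.mk, Triangle.invRotate, Triangle.rotate] at hσ
      obtain ⟨σ₀, hσ₀⟩ := Triangle.coyoneda_exact₂ _ memH σ (by dsimp only [Triangle.mk, Triangle.invRotate, Triangle.rotate]; exact c2 _)
      dsimp only [Triangle.mk, Triangle.invRotate, Triangle.rotate] at hσ₀
      rw [hχ', neg_eq_zero, hσ, hσ₀]
      erw [Category.assoc, Category.assoc, ← Category.assoc u d _, hqi, comp_zero]
    have hγ0 : φ ≫ γ = 0 := hbinj (φ ≫ γ) (by rw [Category.assoc, hγga, comp_zero])
    obtain ⟨ξ, hξ⟩ := Triangle.coyoneda_exact₃ _ memB φ hγ0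
    change U ⟶ X at ξ
    dsimp only [Triangle.mk, Triangle.invRotate, Triangle.rotate] at hξ
    obtain ⟨η, hη⟩ := Triangle.coyoneda_exact₂ _ memX ξ (by dsimp only [Triangle.mk, Triangle.invRotate, Triangle.rotate]; exact c1 _)
    change U ⟶ A₁ at η
    dsimp only [Triangle.mk, Triangle.invRotate, Triangle.rotate] at hη
    obtain ⟨σ₀, hσ₀⟩ := Triangle.coyoneda_exact₂ _ memH (η ≫ p) (by dsimp only [Triangle.mk, Triangle.invRotate, Triangle.rotate]; exact c2 _)
    change U ⟶ T at σ₀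
    dsimp only [Triangle.mk, Triangle.invRotate, Triangle.rotate] at hσ₀
    have hq : σ₀ ≫ (u ≫ d) = 0 := by
      rw [← Category.assoc, ← hσ₀, Category.assoc, hpd, comp_zero]
    obtain ⟨ζ₀, hζ₀⟩ := Triangle.coyoneda_exact₃ _ memA σ₀ (by dsimp only [Triangle.mk, Triangle.invRotate, Triangle.rotate]; exact hq)
    change U ⟶ A at ζ₀
    dsimp only [Triangle.mk, Triangle.invRotate, Triangle.rotate] at hζ₀
    have hdiff : (ζ₀ ≫ g - η) ≫ p = 0 := by
      rw [Preadditive.sub_comp, Category.assoc, ← hg₂, ← Category.assoc, ← hζ₀, hσ₀, sub_self]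
    obtain ⟨δ, hδ⟩ := Triangle.coyoneda_exact₂ _ memA₁ (ζ₀ ≫ g - η)
      (by dsimp only [Triangle.mk, Triangle.invRotate, Triangle.rotate]; exact hdiff)
    dsimp only [Triangle.mk, Triangle.invRotate, Triangle.rotate] at hδ
    have hη' : η = (ζ₀ - δ ≫ i) ≫ g := by
      erw [Preadditive.sub_comp, Category.assoc, hg₁, ← hδ, sub_sub_cancel]
    have h0 : g ≫ (a ≫ β) = 0 := by rw [← Category.assoc]; exact hgaβ
    rw [hξ, hη, hη', Category.assoc, Category.assoc, h0, comp_zero]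
  have hB : tGE t 𝒯 1 B := by
    constructor
    · have hB0 : t.ge 0 B := ge_of_orth t (fun W hW φ => by
        have hW' : t.le (-1) W := by simpa using hW
        exact key W (fun f => zero_of_le_ge t (show (-1:ℤ) < 1 by omega) hW' hB₁ f)
          (fun f => zero_of_le_ge t (show (-1:ℤ) < 0 by omega) hW' (hℱ hF).2 f) φ)
      exact (by norm_num : (1:ℤ) - 1 = 0) ▸ hB0
    · intro T'' hT'' f00
      refine zero_hom_of_iso_tgt ((shiftFunctorZero' C ((1:ℤ) - 1) (by omega)).app B).symm ?_ f00
      exact key T'' (fun f => t.zero' f (h𝒯 hT'').1 hB₁)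
        (fun f => hom_zero _ _ hT'' hF f)
  exact ⟨A, B, hA, hB, g ≫ a, β, γ, memB⟩



lemma tilt_heart_sub
    (h𝒯 : 𝒯 ⊆ heartSet t) (hℱ : ℱ ⊆ heartSet t)
    (h𝒯iso : ∀ ⦃X Y : C⦄, (X ≅ Y) → X ∈ 𝒯 → Y ∈ 𝒯)
    (hℱiso : ∀ ⦃X Y : C⦄, (X ≅ Y) → X ∈ ℱ → Y ∈ ℱ)
    (hdecomp : ∀ E ∈ heartSet t, ∃ (T F : C), T ∈ 𝒯 ∧ F ∈ ℱ ∧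
      ∃ (f : T ⟶ E) (g : E ⟶ F) (h : F ⟶ T⟦(1 : ℤ)⟧), Triangle.mk f g h ∈ distTriang C)
    {E : C} (hLE : tLE t ℱ 0 E) (hGE : tGE t 𝒯 0 E) :
    ∃ (F T : C), F ∈ ℱ ∧ T ∈ 𝒯 ∧
      ∃ (f : F⟦(1 : ℤ)⟧ ⟶ E) (g : E ⟶ T) (h : T ⟶ (F⟦(1 : ℤ)⟧)⟦(1 : ℤ)⟧),
        Triangle.mk f g h ∈ distTriang C := by
  obtain ⟨hE1, hE2⟩ := hLE
  obtain ⟨hE3, hE4⟩ := hGE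
  rw [show (0:ℤ) - 1 = -1 by norm_num] at hE3 hE4
  have hE4' : ∀ T'' ∈ 𝒯, ∀ ρ : T''⟦(1:ℤ)⟧ ⟶ E, ρ = 0 :=
    fun T'' hT'' => shift_one_neg_zero.mpr (hE4 T'' hT'')
  obtain ⟨P, Q, hP, hQge, f, g, h, memE⟩ := t.exists_triangle E (-1) 0 (by omega)
  have hQle : t.le 0 Q := le_of_orth t (fun Z hZ ψ => by
    have hZ1 : t.ge 1 Z := by simpa using hZ
    obtain ⟨k, hk⟩ := Triangle.yoneda_exact₃ _ memE ψ (t.zero' _ hE1 hZ1)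
    have hk0 : k = 0 := zero_of_le_ge t (show (-2:ℤ) < 1 by omega)
      (t.le_shift (-1) 1 (-2) (by omega) P hP) hZ1 k
    rw [hk, hk0, comp_zero]; rfl)
  have hPge : t.ge (-1) P := ge_of_orth t (fun W hW φ => by
    have hW' : t.le (-2) W := by simpa using hW
    obtain ⟨k, hk⟩ := Triangle.coyoneda_exact₂ _ (inv_rot_of_distTriang _ memE) φ
      (by dsimp only [Triangle.mk, Triangle.invRotate, Triangle.rotate]; exact zero_of_le_ge t (show (-2:ℤ) < -1 by omega) hW' hE3 _)
    have hk0 : k = 0 := zero_of_le_ge t (show (-2:ℤ) < 1 by omega) hW'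
      (t.ge_shift 0 (-1) 1 (by omega) Q hQge) k
    rw [hk, hk0, zero_comp]; rfl)
  obtain ⟨T_Q, F_Q, hTQ, hFQ, uQ, vQ, wQ, memQ⟩ := hdecomp Q ⟨hQle, hQge⟩
  have hEF : ∀ f0 : E ⟶ F_Q, f0 = 0 := fun f0 =>
    zero_hom_of_iso_src ((shiftFunctorZero C ℤ).app E).symm (hE2 F_Q hFQ) f0
  have hvQ : vQ = 0 := by
    obtain ⟨k, hk⟩ := Triangle.yoneda_exact₃ _ memE vQ (hEF _)
    have hk0 : k = 0 := zero_of_le_ge t (show (-2:ℤ) < 0 by omega)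
      (t.le_shift (-1) 1 (-2) (by omega) P hP) (hℱ hFQ).2 k
    rw [hk, hk0, comp_zero]; rfl
  have hzF : IsZero F_Q := by
    obtain ⟨k, hk⟩ := Triangle.yoneda_exact₃ _ memQ (𝟙 F_Q)
      (by dsimp only [Triangle.mk, Triangle.invRotate, Triangle.rotate]; rw [Category.comp_id]; exact hvQ)
    have hk0 : k = 0 := zero_of_le_ge t (show (-1:ℤ) < 0 by omega)
      (t.le_shift 0 1 (-1) (by omega) T_Q (h𝒯 hTQ).1) (hℱ hFQ).2 k
    rw [IsZero.iff_id_eq_zero, hk, hk0, comp_zero]; rfl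
  have huQiso : IsIso uQ := (Triangle.isZero₃_iff_isIso₁ _ memQ).1 hzF
  have hQ𝒯 : Q ∈ 𝒯 := h𝒯iso (asIso uQ) hTQ
  have hP₀le : t.le 0 (P⟦(-1:ℤ)⟧) := t.le_shift (-1) (-1) 0 (by omega) P hP
  have hP₀ge : t.ge 0 (P⟦(-1:ℤ)⟧) := t.ge_shift (-1) (-1) 0 (by omega) P hPge
  obtain ⟨T_P, F_P, hTP, hFP, uP, vP, wP, memP⟩ := hdecomp (P⟦(-1:ℤ)⟧) ⟨hP₀le, hP₀ge⟩
  have e : (P⟦(-1:ℤ)⟧)⟦(1:ℤ)⟧ ≅ P :=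
    (shiftFunctorCompIsoId C (-1:ℤ) (1:ℤ) (by omega)).app P
  have huP : uP = 0 := by
    have hκ : uP⟦(1:ℤ)⟧' ≫ (e.hom ≫ f) = 0 := hE4' T_P hTP _
    obtain ⟨k, hk⟩ := Triangle.coyoneda_exact₂ _ (inv_rot_of_distTriang _ memE)
      (uP⟦(1:ℤ)⟧' ≫ e.hom) (by dsimp only [Triangle.mk, Triangle.invRotate, Triangle.rotate]; rw [Category.assoc]; exact hκ)
    have hk0 : k = 0 := zero_of_le_ge t (show (-1:ℤ) < 1 by omega)
      (t.le_shift 0 1 (-1) (by omega) T_P (h𝒯 hTP).1)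
      (t.ge_shift 0 (-1) 1 (by omega) Q hQge) k
    have hζ : uP⟦(1:ℤ)⟧' ≫ e.hom = 0 := by erw [hk, hk0, zero_comp]; rfl
    have hm : uP⟦(1:ℤ)⟧' = 0 := by
      rw [← Category.comp_id (uP⟦(1:ℤ)⟧'), ← e.hom_inv_id, ← Category.assoc, hζ, zero_comp]
    exact (shiftFunctor C (1:ℤ)).map_injective (by rw [hm, Functor.map_zero])
  have hzT : IsZero T_P := by
    obtain ⟨k, hk⟩ := Triangle.coyoneda_exact₂ _ (inv_rot_of_distTriang _ memP) (𝟙 T_P)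
      (by dsimp only [Triangle.mk, Triangle.invRotate, Triangle.rotate]; rw [Category.id_comp]; exact huP)
    have hk0 : k = 0 := zero_of_le_ge t (show (0:ℤ) < 1 by omega) (h𝒯 hTP).1
      (t.ge_shift 0 (-1) 1 (by omega) F_P (hℱ hFP).2) k
    rw [IsZero.iff_id_eq_zero, hk, hk0, zero_comp]; rfl
  have hvPiso : IsIso vP := (Triangle.isZero₁_iff_isIso₂ _ memP).1 hzT
  have hPℱ : P⟦(-1:ℤ)⟧ ∈ ℱ := hℱiso (asIso vP).symm hFP
  refine ⟨P⟦(-1:ℤ)⟧, Q, hPℱ, hQ𝒯, e.hom ≫ f, g, h ≫ e.inv⟦(1:ℤ)⟧', ?_⟩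
  refine isomorphic_distinguished _ memE _ ?_
  refine Triangle.isoMk _ _ e (Iso.refl _) (Iso.refl _) (by dsimp only [Triangle.mk, Triangle.invRotate, Triangle.rotate]; simp) (by dsimp only [Triangle.mk, Triangle.invRotate, Triangle.rotate]; simp) ?_
  dsimp only [Triangle.mk, Triangle.invRotate, Triangle.rotate]
  erw [Category.id_comp, Category.assoc, ← Functor.map_comp, e.inv_hom_id, CategoryTheory.Functor.map_id,
    Category.comp_id]

lemma tilt_heart_sup
    (h𝒯 : 𝒯 ⊆ heartSet t) (hℱ : ℱ ⊆ heartSet t)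
    (hom_zero : ∀ (T F : C), T ∈ 𝒯 → F ∈ ℱ → ∀ f : T ⟶ F, f = 0)
    {E : C} (hE : ∃ (F T : C), F ∈ ℱ ∧ T ∈ 𝒯 ∧
      ∃ (f : F⟦(1 : ℤ)⟧ ⟶ E) (g : E ⟶ T) (h : T ⟶ (F⟦(1 : ℤ)⟧)⟦(1 : ℤ)⟧),
        Triangle.mk f g h ∈ distTriang C) :
    tLE t ℱ 0 E ∧ tGE t 𝒯 0 E := by
  obtain ⟨F', T', hF', hT', f, g, h, mem⟩ := hE
  refine ⟨⟨?_, ?_⟩, ?_, ?_⟩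
  · exact le_of_orth t (fun Z hZ ψ => by
      have hZ1 : t.ge 1 Z := by simpa using hZ
      obtain ⟨k, hk⟩ := Triangle.yoneda_exact₂ _ mem ψ
        (zero_of_le_ge t (show (-1:ℤ) < 1 by omega)
          (t.le_shift 0 1 (-1) (by omega) F' (hℱ hF').1) hZ1 _)
      have hk0 : k = 0 := t.zero' k (h𝒯 hT').1 hZ1
      rw [hk, hk0, comp_zero]; rfl)
  · intro F'' hF'' f0
    refine zero_hom_of_iso_src ((shiftFunctorZero C ℤ).app E) ?_ f0
    intro f1
    obtain ⟨k, hk⟩ := Triangle.yoneda_exact₂ _ mem f1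
      (zero_of_le_ge t (show (-1:ℤ) < 0 by omega)
        (t.le_shift 0 1 (-1) (by omega) F' (hℱ hF').1) (hℱ hF'').2 _)
    erw [hk, hom_zero T' F'' hT' hF'' k, comp_zero]; rfl
  · rw [show (0:ℤ) - 1 = -1 by norm_num]
    exact ge_of_orth t (fun W hW φ => by
      have hW' : t.le (-2) W := by simpa using hW
      obtain ⟨k, hk⟩ := Triangle.coyoneda_exact₂ _ mem φ
        (zero_of_le_ge t (show (-2:ℤ) < 0 by omega) hW' (h𝒯 hT').2 _)
      have hk0 : k = 0 := zero_of_le_ge t (show (-2:ℤ) < -1 by omega) hW'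
        (t.ge_shift 0 1 (-1) (by omega) F' (hℱ hF').2) k
      rw [hk, hk0, zero_comp]; rfl)
  · intro T'' hT'' f0
    have hρ : ∀ ρ : T''⟦(1:ℤ)⟧ ⟶ E, ρ = 0 := by
      intro ρ
      obtain ⟨k, hk⟩ := Triangle.coyoneda_exact₂ _ mem ρ
        (zero_of_le_ge t (show (-1:ℤ) < 0 by omega)
          (t.le_shift 0 1 (-1) (by omega) T'' (h𝒯 hT'').1) (h𝒯 hT').2 _)
      obtain ⟨k₀, rfl⟩ := (shiftFunctor C (1:ℤ)).map_surjective k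
      erw [hk, hom_zero T'' F' hT'' hF' k₀, Functor.map_zero, zero_comp]; rfl
    have hobj : (E⟦(-1:ℤ)⟧ : C) = E⟦(0:ℤ)-1⟧ := by norm_num
    exact zero_hom_of_iso_tgt (eqToIso hobj) (shift_one_neg_zero.mp hρ) f0


end HRSTilt

/-- (Happel–Reiten–Smalø tilting.) Let `𝒜` be the heart of a bounded t-structure on a
triangulated category `𝒟`, and let `(𝒯, ℱ)` be a torsion pair in `𝒜`: two strictly
full subcategories with `Hom(T, F) = 0` for `T ∈ 𝒯`, `F ∈ ℱ`, such that every
`E ∈ 𝒜` sits in a short exact sequence (distinguished triangle)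
`T → E → F → T⟦1⟧` with `T ∈ 𝒯`, `F ∈ ℱ`.  Then the full subcategory
`𝒜^♯ = {E : H⁻¹(E) ∈ ℱ, H⁰(E) ∈ 𝒯, Hⁱ(E) = 0 otherwise}`, equivalently the class
of `E` sitting in a distinguished triangle `F⟦1⟧ → E → T → F⟦2⟧` with `F ∈ ℱ` and
`T ∈ 𝒯`, is the heart of a bounded t-structure on `𝒟`. -/
theorem hrs_tilt_is_heart (t : TStructure C) (ht : TStructureIsBounded t)
    (𝒯 ℱ : Set C) (h𝒯 : 𝒯 ⊆ heartSet t) (hℱ : ℱ ⊆ heartSet t)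
    (h𝒯iso : ∀ ⦃X Y : C⦄, (X ≅ Y) → X ∈ 𝒯 → Y ∈ 𝒯)
    (hℱiso : ∀ ⦃X Y : C⦄, (X ≅ Y) → X ∈ ℱ → Y ∈ ℱ)
    (hom_zero : ∀ (T F : C), T ∈ 𝒯 → F ∈ ℱ → ∀ f : T ⟶ F, f = 0)
    (hdecomp : ∀ E ∈ heartSet t, ∃ (T F : C), T ∈ 𝒯 ∧ F ∈ ℱ ∧
      ∃ (f : T ⟶ E) (g : E ⟶ F) (h : F ⟶ T⟦(1 : ℤ)⟧),
        Triangle.mk f g h ∈ distTriang C) :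
    ∃ t' : TStructure C, TStructureIsBounded t' ∧
      heartSet t' = {E : C | ∃ (F T : C), F ∈ ℱ ∧ T ∈ 𝒯 ∧
        ∃ (f : F⟦(1 : ℤ)⟧ ⟶ E) (g : E ⟶ T) (h : T ⟶ (F⟦(1 : ℤ)⟧)⟦(1 : ℤ)⟧),
          Triangle.mk f g h ∈ distTriang C} := by
  classical
  refine ⟨{
      le := HRSTilt.tLE t ℱ
      ge := HRSTilt.tGE t 𝒯
      le_isClosedUnderIsomorphisms := fun n => ⟨fun e hx => HRSTilt.tLE_iso e hx⟩
      ge_isClosedUnderIsomorphisms := fun n => ⟨fun e hx => HRSTilt.tGE_iso e hx⟩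
      le_shift := HRSTilt.tLE_shift
      ge_shift := HRSTilt.tGE_shift
      zero' := HRSTilt.tilt_zero' hdecomp
      le_zero_le := HRSTilt.tLE_mono hℱ
      ge_one_le := HRSTilt.tGE_anti h𝒯
      exists_triangle_zero_one := fun A =>
        HRSTilt.tilt_exists_triangle t h𝒯 hℱ hom_zero hdecomp A }, ?_, ?_⟩
  · intro X
    obtain ⟨a, b, hga, hlb⟩ := ht X
    refine ⟨a, b + 1, ⟨t.ge_antitone (by omega) X hga, fun T' hT' f =>
        HRSTilt.zero_of_le_ge t (show (0:ℤ) < 1 by omega) (h𝒯 hT').1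
          (t.ge_shift a (a - 1) 1 (by omega) X hga) f⟩,
      ⟨t.le_monotone (by omega) X hlb, fun F' hF' f =>
        HRSTilt.zero_of_le_ge t (show (-1:ℤ) < 0 by omega)
          (t.le_shift b (b + 1) (-1) (by omega) X hlb) (hℱ hF').2 f⟩⟩
  · ext E
    constructor
    · intro hE
      exact HRSTilt.tilt_heart_sub t h𝒯 hℱ h𝒯iso hℱiso hdecomp hE.1 hE.2
    · intro hE
      exact HRSTilt.tilt_heart_sup t h𝒯 hℱ hom_zero hE
end

section
/- Let (a, b, c) be a Markov triple with a > b > c. Then ab − c > c and ac − b > b (so the triples (b, a, ab−c) and (c, ac−b, a) have strictly larger product abc), while bc − a < a (so the triple (bc−a, c, b) has strictly smaller product). -/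
/-- A Markov triple is an ordered triple of positive integers `(a, b, c)`
satisfying `a² + b² + c² = abc`. -/
def IsMarkov (a b c : ℤ) : Prop :=
  0 < a ∧ 0 < b ∧ 0 < c ∧ a ^ 2 + b ^ 2 + c ^ 2 = a * b * c

/-- For a Markov triple with `a > b > c`, one has `ab − c > c` and `ac − b > b`
(so the triples `(b, a, ab−c)` and `(c, ac−b, a)` have strictly larger weight),
while `bc − a < a` (so `(bc−a, c, b)` has strictly smaller weight). -/
theorem markov_weight_comparison (a b c : ℤ) (h : IsMarkov a b c)
    (hab : a > b) (hbc : b > c) :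
    (a * b - c > c ∧ b * a * (a * b - c) > a * b * c) ∧
    (a * c - b > b ∧ c * (a * c - b) * a > a * b * c) ∧
    (b * c - a < a ∧ (b * c - a) * c * b < a * b * c) := by
  obtain ⟨ha, hb, hc, heq⟩ := h
  -- c ≥ 3
  have hc3 : 3 ≤ c := by
    by_contra hlt
    push_neg at hlt
    interval_cases c <;> nlinarith [sq_nonneg (a - b)]
  have hb4 : 4 ≤ b := by omega
  have ha5 : 5 ≤ a := by omega
  -- key: (b - a) * (b - (b*c - a)) = 2*b^2 + c^2 - b^2*c < 0
  have hkey : b * c - a < b := by nlinarith [sq_nonneg (b - c)]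
  have h1 : a * b - c > c := by nlinarith
  have h2 : a * c - b > b := by nlinarith
  have h3 : b * c - a < a := by linarith
  refine ⟨⟨h1, ?_⟩, ⟨h2, ?_⟩, ⟨h3, ?_⟩⟩ <;> nlinarith
end

section
/- For every Markov triple (a, b, c) ≠ (3,3,3) whose entries are pairwise distinct with a > b > c, exactly one of the three triples (b, a, ab−c), (c, ac−b, a), (bc−a, c, b) has weight strictly smaller than abc, namely (bc−a, c, b). -/
/-- For a Markov triple `(a,b,c) ≠ (3,3,3)` with pairwise distinct entries and
`a > b > c`, exactly one of the three triples `(b, a, ab−c)`, `(c, ac−b, a)`,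
`(bc−a, c, b)` has weight strictly smaller than `abc`, namely `(bc−a, c, b)`. -/
theorem markov_exactly_one_smaller (a b c : ℤ) (h : IsMarkov a b c)
    (hne : ¬(a = 3 ∧ b = 3 ∧ c = 3))
    (hd : a ≠ b ∧ b ≠ c ∧ a ≠ c) (hab : a > b) (hbc : b > c) :
    (b * c - a) * c * b < a * b * c ∧
    ¬(b * a * (a * b - c) < a * b * c) ∧
    ¬(c * (a * c - b) * a < a * b * c) := by
  obtain ⟨ha, hb, hc, heq⟩ := h
  have hc3 : 3 ≤ c := by
    rcases lt_or_ge c 3 with h3 | h3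
    · interval_cases c
      · nlinarith [sq_nonneg (a - b)]
      · nlinarith [sq_nonneg (a - b)]
    · exact h3
  have hb4 : c + 1 ≤ b := hbc
  have ha5 : b + 1 ≤ a := hab
  have hkey : b * c - a < b := by
    have h1 : (b - a) * (b - (b * c - a)) = 2 * b ^ 2 + c ^ 2 - b ^ 2 * c := by ring_nf; nlinarith [heq]
    nlinarith [mul_pos hb hc, sq_nonneg (b - c)]
  refine ⟨?_, ?_, ?_⟩
  · nlinarith [mul_pos hb hc]
  · push_neg
    have h2 : 0 ≤ a * b - 2 * c := by nlinarith
    nlinarith [mul_nonneg (mul_pos ha hb).le h2]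
  · push_neg
    have h2 : 0 ≤ a * c - 2 * b := by nlinarith
    nlinarith [mul_nonneg (mul_pos ha hc).le h2]
end

section
/- Every Markov triple can be obtained from (3, 3, 3) by a finite sequence of the moves (a,b,c) ↦ (b, a, ab−c), (a,b,c) ↦ (c, ac−b, a), and (a,b,c) ↦ (bc−a, c, b) and their inverses; equivalently the subgroup Γ³ = ⟨v, w⁻¹vw, wvw⁻¹⟩ of PSL(2,ℤ) acts transitively on the set of Markov triples. -/
/-- The move `(a,b,c) ↦ (b, a, ab−c)`. -/
def markovMove₁ : ℤ × ℤ × ℤ → ℤ × ℤ × ℤ := fun p => (p.2.1, p.1, p.1 * p.2.1 - p.2.2)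

/-- The move `(a,b,c) ↦ (c, ac−b, a)`. -/
def markovMove₂ : ℤ × ℤ × ℤ → ℤ × ℤ × ℤ := fun p => (p.2.2, p.1 * p.2.2 - p.2.1, p.1)

/-- The move `(a,b,c) ↦ (bc−a, c, b)`. -/
def markovMove₃ : ℤ × ℤ × ℤ → ℤ × ℤ × ℤ := fun p => (p.2.1 * p.2.2 - p.1, p.2.2, p.2.1)

/-- One application of one of the three moves or of one of their inverses. -/
def MarkovStep (p q : ℤ × ℤ × ℤ) : Prop :=
  q = markovMove₁ p ∨ q = markovMove₂ p ∨ q = markovMove₃ p ∨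
  p = markovMove₁ q ∨ p = markovMove₂ q ∨ p = markovMove₃ q

lemma zmod3_aux : ∀ x y z : ZMod 3, x^2 + y^2 + z^2 = x*y*z → x = 0 ∧ y = 0 ∧ z = 0 := by
  decide

lemma markov_ge3 {a b c : ℤ} (h : IsMarkov a b c) : 3 ≤ a ∧ 3 ≤ b ∧ 3 ≤ c := by
  obtain ⟨ha, hb, hc, heq⟩ := h
  have hz : ((a : ZMod 3))^2 + (b : ZMod 3)^2 + (c : ZMod 3)^2
      = (a : ZMod 3) * b * c := by exact_mod_cast congrArg (Int.cast : ℤ → ZMod 3) heq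
  obtain ⟨h1, h2, h3⟩ := zmod3_aux _ _ _ hz
  have d1 : (3:ℤ) ∣ a := by exact_mod_cast (ZMod.intCast_zmod_eq_zero_iff_dvd a 3).mp h1
  have d2 : (3:ℤ) ∣ b := by exact_mod_cast (ZMod.intCast_zmod_eq_zero_iff_dvd b 3).mp h2
  have d3 : (3:ℤ) ∣ c := by exact_mod_cast (ZMod.intCast_zmod_eq_zero_iff_dvd c 3).mp h3
  exact ⟨Int.le_of_dvd ha d1, Int.le_of_dvd hb d2, Int.le_of_dvd hc d3⟩

lemma descent' {a b c : ℤ} (h : IsMarkov a b c) (hba : b ≤ a) (hcb : c ≤ b)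
    (hne : ¬(a = 3 ∧ b = 3 ∧ c = 3)) : b * c < 2 * a := by
  obtain ⟨h3a, h3b, h3c⟩ := markov_ge3 h
  obtain ⟨ha, hb, hc, heq⟩ := h
  by_cases hbc : b = 3 ∧ c = 3
  · obtain ⟨rfl, rfl⟩ := hbc
    have ha3 : a ≠ 3 := fun h' => hne ⟨h', rfl, rfl⟩
    have ha4 : 4 ≤ a := by omega
    have : (a - 3) * (a - 6) = 0 := by linear_combination heq
    have : a = 6 := by
      rcases mul_eq_zero.mp this with h' | h' <;> omega
    omega
  · have key : 2 * b^2 + c^2 < b^2 * c := by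
      rcases lt_or_ge 3 c with h4 | h4
      · nlinarith
      · have : c = 3 := le_antisymm h4 h3c
        subst this
        have : b ≠ 3 := fun h' => hbc ⟨h', rfl⟩
        have hb4 : 4 ≤ b := by omega
        nlinarith
    have prod : (b - a) * (b - (b*c - a)) = 2*b^2 + c^2 - b^2*c := by
      linear_combination -heq
    have hlt : (b - a) * (b - (b*c - a)) < 0 := by rw [prod]; linarith
    have hba' : b - a < 0 := by
      rcases lt_trichotomy (b - a) 0 with h' | h' | h'
      · exact h'
      · simp [h'] at hlt
      · nlinarith
    nlinarith
lemma descent {a b c : ℤ} (h : IsMarkov a b c) (hba : b ≤ a) (hca : c ≤ a)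
    (hne : ¬(a = 3 ∧ b = 3 ∧ c = 3)) : b * c < 2 * a := by
  rcases le_total c b with hcb | hbc
  · exact descent' h hba hcb hne
  · have h' : IsMarkov a c b := ⟨h.1, h.2.2.1, h.2.1, by linear_combination h.2.2.2⟩
    have := descent' h' hca hbc (by tauto)
    linarith

lemma markov_flip₃ {a b c : ℤ} (h : IsMarkov a b c) : IsMarkov (b*c - a) c b := by
  obtain ⟨ha, hb, hc, heq⟩ := h
  have hpos : 0 < b*c - a := by nlinarith [sq_nonneg b, sq_nonneg c]
  exact ⟨hpos, hc, hb, by linear_combination heq⟩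

lemma markov_flip₂ {a b c : ℤ} (h : IsMarkov a b c) : IsMarkov c (a*c - b) a := by
  obtain ⟨ha, hb, hc, heq⟩ := h
  have hpos : 0 < a*c - b := by nlinarith [sq_nonneg a, sq_nonneg c]
  exact ⟨hc, hpos, ha, by linear_combination heq⟩

lemma markov_flip₁ {a b c : ℤ} (h : IsMarkov a b c) : IsMarkov b a (a*b - c) := by
  obtain ⟨ha, hb, hc, heq⟩ := h
  have hpos : 0 < a*b - c := by nlinarith [sq_nonneg a, sq_nonneg b]
  exact ⟨hb, ha, hpos, by linear_combination heq⟩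

lemma markov_aux : ∀ n : ℕ, ∀ a b c : ℤ, IsMarkov a b c → a + b + c ≤ (n : ℤ) →
    Relation.ReflTransGen MarkovStep (3, 3, 3) (a, b, c) := by
  intro n
  induction n with
  | zero =>
    intro a b c h hn
    obtain ⟨ha, hb, hc, _⟩ := h
    simp at hn; omega
  | succ n ih =>
    intro a b c h hn
    by_cases h333 : a = 3 ∧ b = 3 ∧ c = 3
    · obtain ⟨rfl, rfl, rfl⟩ := h333; exact Relation.ReflTransGen.refl
    · have h3 := markov_ge3 h
      push_cast at hn
      rcases le_total b a with hba | hab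
      · rcases le_total c a with hca | hac
        · -- a is max, flip a
          have hd := descent h hba hca h333
          have hq := markov_flip₃ h
          have prev := ih (b*c - a) c b hq (by linarith)
          refine prev.tail ?_
          right; right; left
          show (a, b, c) = markovMove₃ (b*c - a, c, b)
          simp [markovMove₃]; ring
        · -- c is max (a ≤ c, b ≤ a ≤ c), flip c
          have h' : IsMarkov c b a := ⟨h.2.2.1, h.2.1, h.1, by linear_combination h.2.2.2⟩
          have hd := descent h' (by linarith) (by linarith) (by tauto)
          have hq := markov_flip₁ h
          have prev := ih b a (a*b - c) hq (by linarith)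
          refine prev.tail ?_
          left
          show (a, b, c) = markovMove₁ (b, a, a*b - c)
          simp [markovMove₁]; ring
      · rcases le_total c b with hcb | hbc
        · -- b is max, flip b
          have h' : IsMarkov b a c := ⟨h.2.1, h.1, h.2.2.1, by linear_combination h.2.2.2⟩
          have hd := descent h' hab hcb (by tauto)
          have hq := markov_flip₂ h
          have prev := ih c (a*c - b) a hq (by linarith)
          refine prev.tail ?_
          right; left
          show (a, b, c) = markovMove₂ (c, a*c - b, a)
          simp [markovMove₂]; ring
        · -- c is max, flip c
          have h' : IsMarkov c b a := ⟨h.2.2.1, h.2.1, h.1, by linear_combination h.2.2.2⟩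
          have hd := descent h' (by linarith) (by linarith) (by tauto)
          have hq := markov_flip₁ h
          have prev := ih b a (a*b - c) hq (by linarith)
          refine prev.tail ?_
          left
          show (a, b, c) = markovMove₁ (b, a, a*b - c)
          simp [markovMove₁]; ring


/-- Every Markov triple is obtained from `(3,3,3)` by a finite sequence of the
three moves and their inverses: the group `Γ³ = ⟨v, w⁻¹vw, wvw⁻¹⟩ ⊂ PSL(2,ℤ)`
acts transitively on Markov triples. -/
theorem markov_transitive (a b c : ℤ) (h : IsMarkov a b c) :
    Relation.ReflTransGen MarkovStep (3, 3, 3) (a, b, c) := by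
  exact markov_aux (a + b + c).toNat a b c h (by
    obtain ⟨ha, hb, hc, _⟩ := h
    omega)
end
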